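/- arXiv:1612.09208 — 12 statements merged into one kernel-verified Lean document; each statement's English description precedes it below -/
import Mathlib

section
/- Let A be a totally unimodular n×m integer matrix with columns v_1,...,v_m ∈ ℤⁿ, let q ≥ 2 be an integer, and let a ∈ (1/q)ℤⁿ. Then there exists an integer vector x ∈ ℤⁿ such that |⟨a - x, v_j⟩| < 1 for all j = 1,...,m. -/
/-!
The real points `y` with `⌊⟨a, v j⟩⌋ ≤ ⟨y, v j⟩ ≤ ⌈⟨a, v j⟩⌉` and `⌊a i⌋ ≤ y i ≤ ⌈a i⌉` form a
polytope containing `a`, so by Krein–Milman it has an extreme point `y`. No nonzero direction `d`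
is orthogonal to all constraints tight at `y`, since otherwise `y ± ε d` would both lie in the
polytope. Hence `n` linearly independent tight rows form a square submatrix `B` of the totally
unimodular matrix `[Aᵀ; 1]`, so `det B = ±1` while `B y` is integral, and `y = B⁻¹ (B y) ∈ ℤⁿ`.
-/

open Set Module Submodule Matrix

namespace Matrix

variable {J ι : Type*} [Fintype ι]

lemma IsTotallyUnimodular.isUnit_det_of_det_ne_zero [DecidableEq ι] {B : Matrix ι ι ℤ}
    (hB : B.IsTotallyUnimodular) (h : B.det ≠ 0) : IsUnit B.det := by
  obtain ⟨s, hs⟩ := (isTotallyUnimodular_iff_fintype B).mp hB ι id id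
  rw [submatrix_id_id] at hs
  rcases s with _ | _ | _ <;> simp_all [← hs]

lemma exists_isUnit_submatrix_of_injective_mulVec [DecidableEq ι] {K : Type*} [Field K]
    [Finite J] {A : Matrix J ι K} (hA : Function.Injective A.mulVec) :
    ∃ f : ι → J, IsUnit (A.submatrix f id) := by
  have hspan : span K (range A.row) = ⊤ := by
    apply Submodule.eq_top_of_finrank_eq
    rw [← rank_eq_finrank_span_row, rank, LinearMap.finrank_range_of_inj hA]
  obtain ⟨κ, a, -, hsp, hli⟩ := exists_linearIndependent' K A.row
  let b : Basis κ K (ι → K) := Basis.mk hli (by rw [hsp, hspan])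
  let e : κ ≃ ι := b.indexEquiv (Pi.basisFun K ι)
  refine ⟨a ∘ e.symm, linearIndependent_rows_iff_isUnit.mp ?_⟩
  exact hli.comp e.symm e.symm.injective

lemma eq_comp_nonsing_inv_mulVec_of_map_mulVec_eq [DecidableEq ι] {R S : Type*} [CommRing R]
    [CommRing S] (φ : R →+* S) {B : Matrix ι ι R} (hB : IsUnit B.det) {y : ι → S} {z : ι → R}
    (h : B.map φ *ᵥ y = φ ∘ z) : y = φ ∘ (B⁻¹ *ᵥ z) := by
  have hBφ : IsUnit (B.map φ).det := (RingHom.map_det φ B).symm ▸ hB.map φ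
  have hinj : Function.Injective (B.map φ).mulVec := fun u w huw => by
    simpa [mulVec_mulVec, nonsing_inv_mul _ hBφ] using congrArg ((B.map φ)⁻¹ *ᵥ ·) huw
  apply hinj
  ext i
  rw [h, ← RingHom.map_mulVec, mulVec_mulVec, mul_nonsing_inv _ hB, one_mulVec]
  rfl

lemma IsTotallyUnimodular.exists_eq_intCast [Finite J] {N : Matrix J ι ℤ}
    (hN : N.IsTotallyUnimodular) (p : J → Prop) {y : ι → ℝ}
    (hp : ∀ d, (∀ t, p t → (N.map (Int.cast : ℤ → ℝ) *ᵥ d) t = 0) → d = 0)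
    (hy : ∀ t, p t → ∃ z : ℤ, (N.map (Int.cast : ℤ → ℝ) *ᵥ y) t = z) :
    ∃ x : ι → ℤ, y = (↑) ∘ x := by
  classical
  let A : Matrix {t // p t} ι ℝ := (N.map (↑)).submatrix Subtype.val id
  have hA : Function.Injective A.mulVec := fun u w huw => sub_eq_zero.mp <|
    hp (u - w) fun t ht => by
      rw [mulVec_sub, Pi.sub_apply, sub_eq_zero]
      exact congrFun huw ⟨t, ht⟩
  obtain ⟨f, hf⟩ := exists_isUnit_submatrix_of_injective_mulVec hA
  let B := N.submatrix (Subtype.val ∘ f) id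
  have hdet : B.det ≠ 0 := by
    have : IsUnit (B.map (Int.cast : ℤ → ℝ)).det := (isUnit_iff_isUnit_det _).mp hf
    rw [← Int.cast_det] at this
    exact fun h => by simp [h] at this
  choose z hz using fun i => hy _ (f i).2
  exact ⟨_, eq_comp_nonsing_inv_mulVec_of_map_mulVec_eq (Int.castRingHom ℝ)
    ((hN.submatrix _ id).isUnit_det_of_det_ne_zero hdet) (funext hz)⟩

open Filter Topology in
lemma eq_zero_of_mem_extremePoints_preimage_Icc [Finite J] {A : Matrix J ι ℝ} {l u : J → ℝ}
    {y d : ι → ℝ} (hy : y ∈ ((A *ᵥ ·) ⁻¹' Icc l u).extremePoints ℝ)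
    (hd : ∀ t, (A *ᵥ d) t ≠ 0 → l t < (A *ᵥ y) t ∧ (A *ᵥ y) t < u t) : d = 0 := by
  have hnear : ∀ᶠ ε in 𝓝 (0 : ℝ), y + ε • d ∈ (A *ᵥ ·) ⁻¹' Icc l u := by
    obtain ⟨hyl, hyu⟩ := (mem_extremePoints.mp hy).1
    simp only [mem_preimage, mulVec_add, mulVec_smul, mem_Icc, Pi.le_def, ← forall_and,
      eventually_all, Pi.add_apply, Pi.smul_apply, smul_eq_mul]
    intro t
    by_cases hdt : (A *ᵥ d) t = 0
    · simp [hdt, hyl t, hyu t]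
    obtain ⟨hl, hu⟩ := hd t hdt
    have hcont : Tendsto (fun ε : ℝ => (A *ᵥ y) t + ε * (A *ᵥ d) t) (𝓝 0)
        (𝓝 ((A *ᵥ y) t)) := by
      have := ((continuous_mul_const ((A *ᵥ d) t)).const_add ((A *ᵥ y) t)).tendsto 0
      simpa using this
    filter_upwards [hcont.eventually_const_lt hl, hcont.eventually_lt_const hu] with ε h1 h2
    exact ⟨h1.le, h2.le⟩
  obtain ⟨δ, hδ, hball⟩ := Metric.eventually_nhds_iff.mp hnear
  have hseg : y ∈ openSegment ℝ (y + (δ / 2) • d) (y + (-(δ / 2)) • d) :=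
    ⟨1 / 2, 1 / 2, by norm_num, by norm_num, by norm_num, by module⟩
  have := (mem_extremePoints.mp hy).2 _ (hball (by simp [abs_of_pos hδ]; linarith)) _
    (hball (by simp [abs_of_pos hδ]; linarith)) hseg
  simpa [hδ.ne'] using this.1

theorem IsTotallyUnimodular.exists_intCast_mem_preimage_Icc [Finite J] {N : Matrix J ι ℤ}
    (hN : N.IsTotallyUnimodular) (lo hi : J → ℤ)
    (hbdd : Bornology.IsBounded ((N.map (Int.cast : ℤ → ℝ) *ᵥ ·) ⁻¹' Icc ((↑) ∘ lo) ((↑) ∘ hi)))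
    (hne : ((N.map (Int.cast : ℤ → ℝ) *ᵥ ·) ⁻¹' Icc ((↑) ∘ lo) ((↑) ∘ hi)).Nonempty) :
    ∃ x : ι → ℤ, (↑) ∘ x ∈ (N.map (Int.cast : ℤ → ℝ) *ᵥ ·) ⁻¹' Icc ((↑) ∘ lo) ((↑) ∘ hi) := by
  set A := N.map (Int.cast : ℤ → ℝ)
  have hcpt : IsCompact ((A *ᵥ ·) ⁻¹' Icc ((↑) ∘ lo) ((↑) ∘ hi)) :=
    Metric.isCompact_of_isClosed_isBounded
      (isClosed_Icc.preimage (continuous_const.matrix_mulVec continuous_id)) hbdd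
  obtain ⟨y, hy⟩ := hcpt.extremePoints_nonempty hne
  obtain ⟨hlo, hhi⟩ := (mem_extremePoints.mp hy).1
  have htight : ∀ t, ¬(lo t < (A *ᵥ y) t ∧ (A *ᵥ y) t < hi t) → ∃ z : ℤ, (A *ᵥ y) t = z := by
    intro t ht
    rcases (hlo t).eq_or_lt with h | h
    · exact ⟨lo t, h.symm⟩
    rcases (hhi t).eq_or_lt with h' | h'
    · exact ⟨hi t, h'⟩
    exact absurd ⟨h, h'⟩ ht
  obtain ⟨x, rfl⟩ := hN.exists_eq_intCast _
    (fun d hd => eq_zero_of_mem_extremePoints_preimage_Icc hy fun t h => not_not.mp (h ∘ hd t))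
    htight
  exact ⟨x, hlo, hhi⟩

end Matrix

lemma abs_sub_lt_one_of_floor_le_of_le_ceil {α : Type*} [Field α] [LinearOrder α]
    [IsStrictOrderedRing α] [FloorRing α] {c w : α} (h₁ : ⌊c⌋ ≤ w) (h₂ : w ≤ ⌈c⌉) :
    |c - w| < 1 := by
  rw [abs_sub_lt_iff]
  constructor <;> linarith [Int.lt_floor_add_one c, Int.ceil_lt_add_one c]

theorem stmt0_general (n m : ℕ) (v : Fin m → Fin n → ℤ)
    (hTU : (Matrix.of fun (i : Fin n) (j : Fin m) => v j i).IsTotallyUnimodular)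
    (a : Fin n → ℝ) :
    ∃ x : Fin n → ℤ, ∀ j, |∑ i, (a i - (x i : ℝ)) * (v j i : ℝ)| < 1 := by
  set N := fromRows (of fun (i : Fin n) (j : Fin m) => v j i)ᵀ (1 : Matrix (Fin n) (Fin n) ℤ)
  set A := N.map (Int.cast : ℤ → ℝ)
  have hrow : ∀ y j, (A *ᵥ y) (.inl j) = ∑ i, (v j i : ℝ) * y i := by
    simp [A, N, fromRows_map, mulVec, dotProduct]
  have hcoord : ∀ y i, (A *ᵥ y) (.inr i) = y i := by
    simp [A, N, fromRows_map, fromRows_mulVec]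
  have hbdd : Bornology.IsBounded ((A *ᵥ ·) ⁻¹' Icc
      ((↑) ∘ fun t => ⌊(A *ᵥ a) t⌋) ((↑) ∘ fun t => ⌈(A *ᵥ a) t⌉)) := by
    refine (Metric.isBounded_Icc (fun i => (⌊a i⌋ : ℝ)) (fun i => (⌈a i⌉ : ℝ))).subset ?_
    rintro y ⟨hylo, hyhi⟩
    exact ⟨fun i => by simpa [hcoord] using hylo (.inr i),
      fun i => by simpa [hcoord] using hyhi (.inr i)⟩
  obtain ⟨x, hxlo, hxhi⟩ := hTU.transpose.fromRows_one.exists_intCast_mem_preimage_Icc _ _ hbdd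
    ⟨a, fun t => Int.floor_le _, fun t => Int.le_ceil _⟩
  refine ⟨x, fun j => ?_⟩
  have := abs_sub_lt_one_of_floor_le_of_le_ceil (hxlo (.inl j)) (hxhi (.inl j))
  change |(A *ᵥ a) (.inl j) - (A *ᵥ ((↑) ∘ x)) (.inl j)| < 1 at this
  rw [hrow, hrow, ← Finset.sum_sub_distrib] at this
  convert this using 3 with i
  simp only [Function.comp_apply]
  ring

/-- If the columns `v 1, ..., v m ∈ ℤⁿ` form a totally unimodular matrix,
`q ≥ 2`, and `a ∈ (1/q)ℤⁿ`, then there is `x ∈ ℤⁿ` with `|⟨a - x, v j⟩| < 1` for all `j`. -/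
theorem stmt0 (n m : ℕ) (v : Fin m → Fin n → ℤ)
    (hTU : (Matrix.of fun (i : Fin n) (j : Fin m) => v j i).IsTotallyUnimodular)
    (q : ℕ) (hq : 2 ≤ q) (a : Fin n → ℝ) (ha : ∀ i, ∃ k : ℤ, a i = (k : ℝ) / q) :
    ∃ x : Fin n → ℤ, ∀ j, |∑ i, (a i - (x i : ℝ)) * (v j i : ℝ)| < 1 :=
  stmt0_general n m v hTU a
end

section
/- Let v_1,...,v_m ∈ ℤⁿ be a spanning configuration of vectors such that some maximal linearly independent subset {v_{i_1},...,v_{i_n}} does not generate ℤⁿ as a group (i.e., the matrix with these columns has |determinant| ≥ 2). Then there exists a ∈ (1/2)ℤⁿ such that for every x ∈ ℤⁿ, there is some j with |⟨a + x, v_j⟩| ≥ 1. -/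
/-!
Let `Λ ⊆ ℤⁿ` be the lattice spanned by the rows `v (s k)`. Since `|det| ≥ 2`, some `e_k` is not in
`Λ`, while `det • e_k` is; so the ideal `{c | c • e_k ∈ Λ}` is `dℤ` with `|d| ≥ 2`. Take `a` with
`2a` a preimage of `d • e_k`: the pairings of `a + x` with the rows are half the coordinates of
`d • e_k + 2ν` for some `ν ∈ Λ`. Either `ν` has a nonzero coordinate off `k`, which doubles to at least
`2`, or `ν` is a multiple of `e_k`, hence lies in `dℤ • e_k`, and the `k`-th coordinate is an odd
multiple of `d`.
-/

open Matrix

section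

variable {ι : Type*} [DecidableEq ι]

lemma exists_two_le_abs_single_add_two_smul {Λ : Submodule ℤ (ι → ℤ)} {k : ι} {d : ℤ}
    (hd : 2 ≤ |d|) (hdvd : ∀ c, Pi.single k c ∈ Λ → d ∣ c) {ν : ι → ℤ} (hν : ν ∈ Λ) :
    ∃ j, 2 ≤ |(Pi.single k d + (2 : ℤ) • ν : ι → ℤ) j| := by
  by_cases hsupp : ∃ j ≠ k, ν j ≠ 0
  · obtain ⟨j, hjk, hj⟩ := hsupp
    refine ⟨j, ?_⟩
    have := Int.one_le_abs hj
    simp only [Pi.add_apply, Pi.single_eq_of_ne hjk, Pi.smul_apply, smul_eq_mul, zero_add,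
      abs_mul, abs_two]
    omega
  · push Not at hsupp
    have hν_single : ν = Pi.single k (ν k) := by
      ext j
      by_cases hjk : j = k
      · subst hjk; simp
      · simp [hjk, hsupp j hjk]
    obtain ⟨c, hc⟩ := hdvd _ (hν_single ▸ hν)
    refine ⟨k, ?_⟩
    have hodd : 1 ≤ |1 + 2 * c| := Int.one_le_abs (by omega)
    calc 2 ≤ |d| * 1 := by simpa using hd
      _ ≤ |d| * |1 + 2 * c| := by gcongr
      _ = |(Pi.single k d + (2 : ℤ) • ν : ι → ℤ) k| := by simp [hc, ← abs_mul]; ring_nf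

lemma exists_two_le_abs_forall_single_mem_iff {Λ : Submodule ℤ (ι → ℤ)} {k : ι}
    (hk : Pi.single k 1 ∉ Λ) {c : ℤ} (hc₀ : c ≠ 0) (hc : Pi.single k c ∈ Λ) :
    ∃ d : ℤ, 2 ≤ |d| ∧ ∀ c, Pi.single k c ∈ Λ ↔ d ∣ c := by
  set I : Ideal ℤ := Λ.comap (LinearMap.single ℤ (fun _ => ℤ) k)
  set d := Submodule.IsPrincipal.generator I
  have hI : ∀ c, Pi.single k c ∈ Λ ↔ d ∣ c := fun c => by
    rw [← Ideal.mem_span_singleton, Ideal.span_singleton_generator]; rfl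
  refine ⟨d, ?_, hI⟩
  have hd₀ : d ≠ 0 := by
    rintro hd
    exact hc₀ (zero_dvd_iff.1 (hd ▸ (hI c).1 hc))
  have hd₁ : |d| ≠ 1 := fun h => hk ((hI 1).2 (Int.isUnit_iff_abs_eq.2 h).dvd)
  have := abs_pos.2 hd₀
  omega

variable [Fintype ι]

lemma exists_single_notMem_range_mulVecLin {N : Matrix ι ι ℤ} (hN : ¬ IsUnit N.det) :
    ∃ k, Pi.single k 1 ∉ LinearMap.range N.mulVecLin := by
  by_contra! hall
  refine hN ((isUnit_iff_isUnit_det N).1 (mulVec_surjective_iff_isUnit.1 fun w => ?_))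
  have htop : LinearMap.range N.mulVecLin = ⊤ := by
    rw [eq_top_iff, ← (Pi.basisFun ℤ ι).span_eq, Submodule.span_le]
    rintro _ ⟨k, rfl⟩
    simpa using hall k
  exact LinearMap.range_eq_top.1 htop w

lemma single_det_mem_range_mulVecLin (N : Matrix ι ι ℤ) (k : ι) :
    Pi.single k N.det ∈ LinearMap.range N.mulVecLin :=
  ⟨N.adjugate *ᵥ Pi.single k 1, by
    rw [mulVecLin_apply, mulVec_mulVec, mul_adjugate, smul_mulVec, one_mulVec, ← Pi.single_smul,
      smul_eq_mul, mul_one]⟩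

lemma exists_forall_exists_two_le_abs_mulVec {N : Matrix ι ι ℤ} (hdet : 2 ≤ |N.det|) :
    ∃ t : ι → ℤ, ∀ x, ∃ j, 2 ≤ |(N *ᵥ (t + (2 : ℤ) • x)) j| := by
  have hunit : ¬ IsUnit N.det := by rw [Int.isUnit_iff_abs_eq]; omega
  obtain ⟨k, hk⟩ := exists_single_notMem_range_mulVecLin hunit
  obtain ⟨d, hd, hmem⟩ := exists_two_le_abs_forall_single_mem_iff hk
    (by rintro h; simp [h] at hdet) (single_det_mem_range_mulVecLin N k)
  obtain ⟨t, ht⟩ := (hmem d).2 dvd_rfl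
  refine ⟨t, fun x => ?_⟩
  rw [mulVec_add, mulVec_smul, ← mulVecLin_apply, ht]
  exact exists_two_le_abs_single_add_two_smul hd (fun c => (hmem c).1) ⟨x, rfl⟩

end

theorem stmt2_general (n m : ℕ) (v : Fin m → Fin n → ℤ)
    (s : Fin n → Fin m)
    (hdet : 2 ≤ |(Matrix.of fun (i : Fin n) (k : Fin n) => v (s k) i).det|) :
    ∃ a : Fin n → ℝ, (∀ i, ∃ k : ℤ, a i = (k : ℝ) / 2) ∧
      ∀ x : Fin n → ℤ, ∃ j, 1 ≤ |∑ i, (a i + (x i : ℝ)) * (v j i : ℝ)| := by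
  set M := Matrix.of fun (i : Fin n) (k : Fin n) => v (s k) i
  obtain ⟨t, ht⟩ := exists_forall_exists_two_le_abs_mulVec (N := Mᵀ) (by rwa [det_transpose])
  refine ⟨fun i => (t i : ℝ) / 2, fun i => ⟨t i, rfl⟩, fun x => ?_⟩
  obtain ⟨k, hk⟩ := ht x
  have hsum : ∑ i, ((t i : ℝ) / 2 + x i) * v (s k) i = ((Mᵀ *ᵥ (t + (2 : ℤ) • x)) k : ℝ) / 2 := by
    simp only [M, mulVec, dotProduct, transpose_apply, of_apply, Pi.add_apply, Pi.smul_apply,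
      smul_eq_mul]
    push_cast
    rw [Finset.sum_div]
    exact Finset.sum_congr rfl fun i _ => by ring
  refine ⟨s k, ?_⟩
  rw [hsum, abs_div, abs_two, le_div_iff₀ two_pos, one_mul, ← Int.cast_abs]
  exact_mod_cast hk

/-- If a spanning configuration `v 1, ..., v m ∈ ℤⁿ` has a maximal
(i.e. size-`n`) linearly independent subset whose determinant has absolute value ≥ 2,
then some class `a ∈ (1/2)ℤⁿ` has no representative `a + x`, `x ∈ ℤⁿ`, in the open
polytope `{u : |⟨u, v j⟩| < 1 ∀ j}`. -/
theorem stmt2 (n m : ℕ) (v : Fin m → Fin n → ℤ)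
    (hspan : Submodule.span ℝ (Set.range fun j => fun i => (v j i : ℝ)) = ⊤)
    (s : Fin n → Fin m)
    (hindep : LinearIndependent ℝ (fun k => fun i => (v (s k) i : ℝ)))
    (hdet : 2 ≤ |(Matrix.of fun (i : Fin n) (k : Fin n) => v (s k) i).det|) :
    ∃ a : Fin n → ℝ, (∀ i, ∃ k : ℤ, a i = (k : ℝ) / 2) ∧
      ∀ x : Fin n → ℤ, ∃ j, 1 ≤ |∑ i, (a i + (x i : ℝ)) * (v j i : ℝ)| :=
  stmt2_general n m v s hdet
end

section
/- Let B be an n×n nonsingular upper triangular nonnegative integer matrix in Hermite normal form (each off-diagonal entry B_{ij} with i < j satisfies 0 ≤ B_{ij} < B_{jj}), and suppose the diagonal entries B_{11},...,B_{rr} equal 1 and B_{jj} ≥ 2 for j > r. Then the abelian group ℤⁿ/(column lattice of B) is 2-torsion (every element has order dividing 2) if and only if the lower-right (n-r)×(n-r) block of B equals 2 times the identity matrix. -/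
/-!
Take a column `j ≥ r` and solve `B y = 2 eⱼ`. Back substitution in the triangular system gives
`y l = 0` for `l > j`, hence `B j j * y j = 2`, so `B j j = 2` and `y j = 1`. Going upwards
from `j`, row `k ≥ r` reads `B k k * y k + B k j = 0` with `0 ≤ B k j < B j j = 2 ≤ B k k`, which
forces `y k = B k j = 0`.

Conversely, the Hermite bounds make the first `r` columns unit vectors, so `B` fixes every vector
supported on the first `r` coordinates; with the lower-right block `2 • 1`, this is enough to
solve `B y = 2 • x`.
-/

namespace Matrix

variable {ι R : Type*} [Fintype ι]

theorem mulVec_eq_self_of_col_eq_one [DecidableEq ι] [NonAssocSemiring R] {B : Matrix ι ι R}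
    {t : Set ι} (hcol : ∀ i, ∀ l ∈ t, B i l = (1 : Matrix ι ι R) i l) {v : ι → R}
    (hv : ∀ i ∉ t, v i = 0) : B *ᵥ v = v := by
  have hrow : ∀ i l, B i l * v l = (1 : Matrix ι ι R) i l * v l := fun i l => by
    by_cases hl : l ∈ t
    · rw [hcol i l hl]
    · simp only [hv l hl, mul_zero]
  conv_rhs => rw [← one_mulVec v]
  ext i
  simp only [mulVec, dotProduct, hrow]

namespace BlockTriangular

variable [LinearOrder ι] [Semiring R] {B : Matrix ι ι R} (hB : B.BlockTriangular id)
include hB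

theorem mulVec_apply_eq_diag_mul {y : ι → R} {k : ι} (hy : ∀ l, k < l → y l = 0) :
    (B *ᵥ y) k = B k k * y k := by
  refine Finset.sum_eq_single k (fun l _ hlk => ?_) (by simp)
  rcases hlk.lt_or_gt with h | h
  · simp only [hB h, zero_mul]
  · simp only [hy l h, mul_zero]

theorem mulVec_apply_eq_diag_mul_add {y : ι → R} {k j : ι} (hkj : k < j)
    (hy : ∀ l, k < l → l ≠ j → y l = 0) :
    (B *ᵥ y) k = B k k * y k + B k j * y j := by
  refine Finset.sum_eq_add_of_mem k j (by simp) (by simp) hkj.ne fun l _ ⟨hlk, hlj⟩ => ?_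
  rcases hlk.lt_or_gt with h | h
  · simp only [hB h, zero_mul]
  · simp only [hy l h hlj, mul_zero]

theorem eq_zero_of_mulVec_apply_eq_zero [NoZeroDivisors R] {y : ι → R} {j : ι}
    (hdiag : ∀ k, j < k → B k k ≠ 0) (h : ∀ k, j < k → (B *ᵥ y) k = 0) :
    ∀ k, j < k → y k = 0 := by
  intro k
  induction k using WellFoundedGT.induction with
  | _ k ih =>
    intro hjk
    have hrow := h k hjk
    rw [hB.mulVec_apply_eq_diag_mul fun l hkl => ih l hkl (hjk.trans hkl)] at hrow
    exact (mul_eq_zero.1 hrow).resolve_left (hdiag k hjk)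

end BlockTriangular

end Matrix

open Matrix

section HermiteNormalForm

variable {ι : Type*} [LinearOrder ι] {B : Matrix ι ι ℤ} (hB : B.BlockTriangular id)
  (hnonneg : ∀ i j, 0 ≤ B i j) (hHNF : ∀ i j, i < j → B i j < B j j)
include hB hnonneg hHNF

theorem col_eq_one_of_diag_eq_one {l : ι} (hl : B l l = 1) (i : ι) :
    B i l = (1 : Matrix ι ι ℤ) i l := by
  rcases lt_trichotomy i l with h | rfl | h
  · rw [one_apply_ne h.ne]
    linarith [hHNF i l h, hnonneg i l]
  · rw [hl, one_apply_eq]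
  · rw [one_apply_ne h.ne', hB h]

theorem apply_eq_of_mulVec_eq_two_smul_single [Fintype ι] {s : Set ι} (hs : IsUpperSet s)
    (hs2 : ∀ k ∈ s, 2 ≤ B k k) {j : ι} (hj : j ∈ s) {y : ι → ℤ}
    (hy : B *ᵥ y = (2 : ℤ) • Pi.single j 1) :
    B j j = 2 ∧ ∀ i ∈ s, i < j → B i j = 0 := by
  have hrow : ∀ k, (B *ᵥ y) k = if k = j then 2 else 0 := fun k => by
    rw [hy]
    by_cases h : k = j <;> simp [h]
  have hy_gt : ∀ k, j < k → y k = 0 :=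
    hB.eq_zero_of_mulVec_apply_eq_zero (fun k hjk => by linarith [hs2 k (hs hjk.le hj)])
      fun k hjk => by rw [hrow, if_neg hjk.ne']
  have hjj : B j j * y j = 2 := by
    rw [← hB.mulVec_apply_eq_diag_mul hy_gt, hrow, if_pos rfl]
  obtain ⟨hBjj, hyj⟩ : B j j = 2 ∧ y j = 1 := by
    have := hs2 j hj
    have : 1 ≤ y j := by nlinarith
    constructor <;> nlinarith
  have hrow_lt :
      ∀ k ∈ s, k < j → (∀ l, k < l → l < j → y l = 0) → y k = 0 ∧ B k j = 0 := by
    intro k hk hkj hy_between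
    have hk2 := hs2 k hk
    have h := hB.mulVec_apply_eq_diag_mul_add hkj fun l hkl hlj =>
      hlj.lt_or_gt.elim (hy_between l hkl) (hy_gt l)
    rw [hrow, if_neg hkj.ne, hyj, mul_one] at h
    -- `B k k` divides `B k j`, and `0 ≤ B k j < B j j = 2 ≤ B k k`
    have hBkj : B k j = 0 := Int.eq_zero_of_abs_lt_dvd (m := B k k) ⟨-y k, by linarith⟩ <| by
      rw [abs_of_nonneg (hnonneg k j)]
      linarith [hHNF k j hkj]
    rw [hBkj, add_zero] at h
    exact ⟨(mul_eq_zero.1 h.symm).resolve_left (by omega), hBkj⟩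
  have hy_lt : ∀ k ∈ s, k < j → y k = 0 := by
    intro k
    induction k using WellFoundedGT.induction with
    | _ k ih =>
      exact fun hk hkj => (hrow_lt k hk hkj fun l hkl hlj => ih l hkl (hs hkl.le hk) hlj).1
  exact ⟨hBjj, fun i hi hij => (hrow_lt i hi hij fun l hil hlj => hy_lt l (hs hil.le hi) hlj).2⟩

end HermiteNormalForm

theorem exists_mulVec_eq_two_smul {ι R : Type*} [Fintype ι] [DecidableEq ι] [Ring R]
    {B : Matrix ι ι R} {t : Set ι} (hcol : ∀ i, ∀ l ∈ t, B i l = (1 : Matrix ι ι R) i l)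
    (hblock : ∀ i ∉ t, ∀ l ∉ t, B i l = if i = l then 2 else 0) (x : ι → R) :
    ∃ y, (2 : R) • x = B *ᵥ y := by
  classical
  -- `x'` already gives `2 • x` on the rows outside `t`; the remaining error is supported on `t`,
  -- where `B` acts as the identity.
  set x' : ι → R := fun l => if l ∈ t then 0 else x l
  have hx' : ∀ i ∉ t, (B *ᵥ x') i = 2 * x i := fun i hi => by
    rw [mulVec, dotProduct, Finset.sum_eq_single i]
    · simp [x', hi, hblock i hi i hi]
    · intro l _ hli
      by_cases hl : l ∈ t
      · simp [x', hl]
      · simp [hblock i hi l hl, hli.symm]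
    · simp
  refine ⟨x' + ((2 : R) • x - B *ᵥ x'), ?_⟩
  rw [mulVec_add, mulVec_eq_self_of_col_eq_one (v := 2 • x - B *ᵥ x') hcol fun i hi => ?_]
  · abel
  · simp [hx' i hi]

theorem stmt3_general (n r : ℕ) (B : Matrix (Fin n) (Fin n) ℤ)
    (htri : ∀ i j : Fin n, j < i → B i j = 0)
    (hnonneg : ∀ i j : Fin n, 0 ≤ B i j)
    (hHNF : ∀ i j : Fin n, i < j → B i j < B j j)
    (hdiag1 : ∀ j : Fin n, (j : ℕ) < r → B j j = 1)
    (hdiag2 : ∀ j : Fin n, r ≤ (j : ℕ) → 2 ≤ B j j) :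
    (∀ x : Fin n → ℤ, ∃ y : Fin n → ℤ, (2 : ℤ) • x = B.mulVec y) ↔
      (∀ i j : Fin n, r ≤ (i : ℕ) → r ≤ (j : ℕ) →
        B i j = if i = j then 2 else 0) := by
  have hB : B.BlockTriangular id := fun i j h => htri i j h
  constructor
  · intro H i j hi hj
    obtain ⟨y, hy⟩ := H (Pi.single j 1)
    obtain ⟨hjj, hlt⟩ := apply_eq_of_mulVec_eq_two_smul_single hB hnonneg hHNF
      (s := {k | r ≤ (k : ℕ)}) (fun _ _ hab (ha : r ≤ _) => ha.trans hab) hdiag2 hj hy.symm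
    rcases lt_trichotomy i j with h | rfl | h
    · rw [if_neg h.ne, hlt i hi h]
    · rw [if_pos rfl, hjj]
    · rw [if_neg h.ne', htri i j h]
  · exact fun H => exists_mulVec_eq_two_smul (t := {l | (l : ℕ) < r})
      (fun i l hl => col_eq_one_of_diag_eq_one hB hnonneg hHNF (hdiag1 l hl) i)
      fun i hi l hl => H i l (not_lt.1 hi) (not_lt.1 hl)

/-- Proposition 3.1: For `B` nonsingular, upper triangular, in Hermite
normal form with diagonal entries `1` in the first `r` columns and `≥ 2` afterwards,
the quotient `ℤⁿ/(column lattice of B)` is 2-torsion iff the lower-right block of `B`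
is `2·I`. -/
theorem stmt3 (n r : ℕ) (hr : r ≤ n) (B : Matrix (Fin n) (Fin n) ℤ)
    (hdet : B.det ≠ 0)
    (htri : ∀ i j : Fin n, j < i → B i j = 0)
    (hnonneg : ∀ i j : Fin n, 0 ≤ B i j)
    (hHNF : ∀ i j : Fin n, i < j → B i j < B j j)
    (hdiag1 : ∀ j : Fin n, (j : ℕ) < r → B j j = 1)
    (hdiag2 : ∀ j : Fin n, r ≤ (j : ℕ) → 2 ≤ B j j) :
    (∀ x : Fin n → ℤ, ∃ y : Fin n → ℤ, (2 : ℤ) • x = B.mulVec y) ↔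
      (∀ i j : Fin n, r ≤ (i : ℕ) → r ≤ (j : ℕ) →
        B i j = if i = j then 2 else 0) :=
  stmt3_general n r B htri hnonneg hHNF hdiag1 hdiag2
end

section
/- Let v_1,...,v_n ∈ ℤⁿ be the columns of a matrix B in Hermite normal form (upper triangular with nonnegative entries, off-diagonal entries in each column strictly smaller than the diagonal entry), with diagonal entries B_{11} = ... = B_{rr} = 1 and B_{jj} ≥ 2 for j > r. Fix an integer q ≥ 2 and j with 1 ≤ j ≤ n. Let f_1,...,f_n be the standard basis of ℤⁿ, and suppose a ∈ (1/q)ℤⁿ lies in the span of f_j,...,f_n. If there exists u ∈ ℤⁿ with |⟨a + u, v_i⟩| < 1 for all i = 1,...,n, then there exists such a u lying in the span of f_j,...,f_n. -/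
/-!
Since `a` vanishes on the coordinates before `j` and `B` is upper triangular, for `k < j` the
pairing `⟨a + u, v k⟩` only involves `u` on coordinates `≤ k`. Inductively these vanish below `k`,
so the pairing is the integer `u k * B k k`; having absolute value `< 1` it is `0`, and as the
diagonal entry is nonzero, `u k = 0`. Hence every admissible `u` is already supported on
coordinates `j, ..., n`.
-/

section UpperTriangular

variable {ι : Type*} [Fintype ι] [LinearOrder ι] {B : Matrix ι ι ℤ}

theorem sum_mul_upperTriangular_eq_diag (htri : ∀ i k, k < i → B i k = 0) {x : ι → ℝ} {k : ι}
    (hx : ∀ i < k, x i = 0) : ∑ i, x i * (B i k : ℝ) = x k * B k k := by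
  refine Finset.sum_eq_single k (fun i _ hik => ?_) (by simp)
  rcases lt_or_gt_of_ne hik with h | h
  · rw [hx i h, zero_mul]
  · rw [htri i k h, Int.cast_zero, mul_zero]

theorem eq_zero_of_abs_sum_mul_upperTriangular_lt_one (htri : ∀ i k, k < i → B i k = 0)
    (hdiag : ∀ k, B k k ≠ 0) {a : ι → ℝ} {j : ι} (hsupp : ∀ i < j, a i = 0) {u : ι → ℤ}
    (hu : ∀ k, |∑ i, (a i + (u i : ℝ)) * (B i k : ℝ)| < 1) : ∀ i < j, u i = 0 := by
  intro k
  induction k using WellFoundedLT.induction with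
  | _ k ih =>
    intro hkj
    have hbelow : ∀ i < k, a i + (u i : ℝ) = 0 := fun i hik => by
      rw [hsupp i (hik.trans hkj), ih i hik (hik.trans hkj), Int.cast_zero, add_zero]
    have hint : |u k * B k k| < 1 := by
      have := hu k
      rw [sum_mul_upperTriangular_eq_diag htri hbelow, hsupp k hkj, zero_add] at this
      exact_mod_cast this
    exact (mul_eq_zero.mp (Int.abs_lt_one_iff.mp hint)).resolve_right (hdiag k)

end UpperTriangular

theorem stmt4_general (n r : ℕ) (B : Matrix (Fin n) (Fin n) ℤ)
    (htri : ∀ i k : Fin n, k < i → B i k = 0)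
    (hdiag1 : ∀ k : Fin n, (k : ℕ) < r → B k k = 1)
    (hdiag2 : ∀ k : Fin n, r ≤ (k : ℕ) → 2 ≤ B k k)
    (j : Fin n)
    (a : Fin n → ℝ)
    (hsupp : ∀ i : Fin n, i < j → a i = 0)
    (hex : ∃ u : Fin n → ℤ, ∀ k : Fin n, |∑ i, (a i + (u i : ℝ)) * (B i k : ℝ)| < 1) :
    ∃ u : Fin n → ℤ, (∀ i : Fin n, i < j → u i = 0) ∧
      ∀ k : Fin n, |∑ i, (a i + (u i : ℝ)) * (B i k : ℝ)| < 1 := by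
  obtain ⟨u, hu⟩ := hex
  have hdiag : ∀ k, B k k ≠ 0 := fun k => by
    rcases lt_or_ge (k : ℕ) r with h | h
    · simp [hdiag1 k h]
    · have := hdiag2 k h; omega
  exact ⟨u, eq_zero_of_abs_sum_mul_upperTriangular_lt_one htri hdiag hsupp hu, hu⟩

/-- Lemma 3.2: With `B` in Hermite normal form (diagonal `1` in the
first `r` columns, `≥ 2` afterwards) and `a ∈ (1/q)ℤⁿ` supported on coordinates
`j, ..., n`, if some integer translate `a + u` lies in the open polytope
`{w : |⟨w, v i⟩| < 1 ∀ i}` (where `v i` is the `i`-th column of `B`),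
then some such translate with `u` supported on coordinates `j, ..., n` does. -/
theorem stmt4 (n r : ℕ) (hr : r ≤ n) (B : Matrix (Fin n) (Fin n) ℤ)
    (htri : ∀ i k : Fin n, k < i → B i k = 0)
    (hnonneg : ∀ i k : Fin n, 0 ≤ B i k)
    (hHNF : ∀ i k : Fin n, i < k → B i k < B k k)
    (hdiag1 : ∀ k : Fin n, (k : ℕ) < r → B k k = 1)
    (hdiag2 : ∀ k : Fin n, r ≤ (k : ℕ) → 2 ≤ B k k)
    (q : ℕ) (hq : 2 ≤ q) (j : Fin n)
    (a : Fin n → ℝ) (ha : ∀ i, ∃ k : ℤ, a i = (k : ℝ) / q)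
    (hsupp : ∀ i : Fin n, i < j → a i = 0)
    (hex : ∃ u : Fin n → ℤ, ∀ k : Fin n, |∑ i, (a i + (u i : ℝ)) * (B i k : ℝ)| < 1) :
    ∃ u : Fin n → ℤ, (∀ i : Fin n, i < j → u i = 0) ∧
      ∀ k : Fin n, |∑ i, (a i + (u i : ℝ)) * (B i k : ℝ)| < 1 :=
  stmt4_general n r B htri hdiag1 hdiag2 j a hsupp hex
end

section
/- Let v_1,...,v_n ∈ ℤⁿ be linearly independent vectors forming the columns of a matrix B in Hermite normal form, and suppose some diagonal entry B_{jj} ≥ 3. Then for every integer q ≥ 2, setting a = (1/q)·⌊q/2⌋·f_j (where f_j is the j-th standard basis vector), every representative a + u with u ∈ ℤⁿ of the class [a] ∈ (1/q)ℤⁿ/ℤⁿ that satisfies |⟨a + u, v_i⟩| < 1 for all i < j must fail |⟨a + u, v_j⟩| < 1. -/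
/-! Since `a` is supported at `j` and `B j i = 0` for `i < j`, the inner products with the
columns `i < j` are integers of absolute value `< 1`, hence `0`; back-substitution through the
triangular system with nonzero diagonal forces `u i = 0` for `i < j`. The `j`-th inner product
is then `(⌊q/2⌋/q + u j) B j j`, and `⌊q/2⌋/q ∈ [1/3, 1/2]` lies at distance `≥ 1/3` from every
integer, so it has absolute value `≥ B j j / 3 ≥ 1`. -/

open Matrix Finset

namespace Matrix.IsUpperTriangular

variable {m R : Type*} [Fintype m] [LinearOrder m] {B : Matrix m m R}

theorem diag_ne_zero [CommRing R] [DecidableEq m] (hB : B.IsUpperTriangular) (hdet : B.det ≠ 0)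
    (i : m) : B i i ≠ 0 := fun h =>
  hdet (det_of_isUpperTriangular hB ▸ prod_eq_zero (mem_univ i) h)

theorem vecMul_apply_eq_mul_diag [NonUnitalNonAssocSemiring R] (hB : B.IsUpperTriangular)
    {u : m → R} {j : m} (hu : ∀ i < j, u i = 0) : (u ᵥ* B) j = u j * B j j := by
  refine sum_eq_single j (fun i _ hij => ?_) (fun h => absurd (mem_univ j) h)
  show u i * B i j = 0
  rcases hij.lt_or_gt with hlt | hgt
  · rw [hu i hlt, zero_mul]
  · rw [hB hgt, mul_zero]

theorem eq_zero_of_vecMul_eq_zero [NonUnitalNonAssocSemiring R] [NoZeroDivisors R]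
    (hB : B.IsUpperTriangular) (hdiag : ∀ i, B i i ≠ 0) {u : m → R} {j : m}
    (hu : ∀ i < j, (u ᵥ* B) i = 0) : ∀ i < j, u i = 0 := by
  intro i
  induction i using WellFoundedLT.induction with
  | _ i ih =>
    intro hij
    have hi := hu i hij
    rw [hB.vecMul_apply_eq_mul_diag fun k hk => ih k hk (hk.trans hij)] at hi
    exact (mul_eq_zero.mp hi).resolve_right (hdiag i)

end Matrix.IsUpperTriangular

theorem sum_single_add_intCast_mul {m : Type*} [Fintype m] [DecidableEq m] (j : m) (c : ℝ)
    (u : m → ℤ) (B : Matrix m m ℤ) (k : m) :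
    ∑ i, ((Pi.single j c : m → ℝ) i + (u i : ℝ)) * (B i k : ℝ) = c * B j k + ((u ᵥ* B) k : ℤ) := by
  simp [add_mul, sum_add_distrib, Pi.single_apply, vecMul, dotProduct]

theorem nat_div_two_div_mem_Icc {q : ℕ} (hq : 2 ≤ q) :
    ((q / 2 : ℕ) : ℝ) / q ∈ Set.Icc (1 / 3) (1 / 2) := by
  have hq0 : (0 : ℝ) < q := by positivity
  have hlo : (q : ℝ) ≤ 3 * ((q / 2 : ℕ) : ℝ) := by exact_mod_cast (by omega : q ≤ 3 * (q / 2))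
  have hhi : 2 * ((q / 2 : ℕ) : ℝ) ≤ q := by exact_mod_cast Nat.mul_div_le q 2
  constructor
  · rw [le_div_iff₀ hq0]; linarith
  · rw [div_le_iff₀ hq0]; linarith

theorem one_third_le_abs_add_intCast {c : ℝ} (hc : c ∈ Set.Icc (1 / 3 : ℝ) (2 / 3)) (z : ℤ) :
    1 / 3 ≤ |c + z| := by
  obtain ⟨hlo, hhi⟩ := hc
  rcases le_or_gt 0 z with hz | hz
  · have : (0 : ℝ) ≤ z := by exact_mod_cast hz
    rw [abs_of_nonneg (by linarith)]; linarith
  · have : (z : ℝ) ≤ -1 := by exact_mod_cast Int.le_sub_one_of_lt hz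
    rw [abs_of_nonpos (by linarith)]; linarith

theorem stmt5_general (n : ℕ) (B : Matrix (Fin n) (Fin n) ℤ)
    (hdet : B.det ≠ 0)
    (htri : ∀ i k : Fin n, k < i → B i k = 0)
    (j : Fin n) (hj : 3 ≤ B j j)
    (q : ℕ) (hq : 2 ≤ q)
    (a : Fin n → ℝ)
    (hadef : a = fun i => if i = j then ((q / 2 : ℕ) : ℝ) / q else 0) :
    ∀ u : Fin n → ℤ,
      (∀ i : Fin n, i < j → |∑ i', (a i' + (u i' : ℝ)) * (B i' i : ℝ)| < 1) →
      ¬ (|∑ i', (a i' + (u i' : ℝ)) * (B i' j : ℝ)| < 1) := by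
  intro u hu
  have hB : B.IsUpperTriangular := fun i k h => htri i k h
  set c : ℝ := ((q / 2 : ℕ) : ℝ) / q
  have ha : a = Pi.single j c := by
    rw [hadef]; ext i; simp [Pi.single_apply]
  simp only [ha, sum_single_add_intCast_mul] at hu ⊢
  have hprefix : ∀ i < j, (u ᵥ* B) i = 0 := fun i hi => by
    have h := hu i hi
    rw [htri j i hi, Int.cast_zero, mul_zero, zero_add] at h
    exact Int.abs_lt_one_iff.mp (by exact_mod_cast h)
  have hu0 := hB.eq_zero_of_vecMul_eq_zero (hB.diag_ne_zero hdet) hprefix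
  rw [hB.vecMul_apply_eq_mul_diag hu0, Int.cast_mul, ← add_mul, abs_mul, not_lt]
  have hc := nat_div_two_div_mem_Icc hq
  have hBjj : (3 : ℝ) ≤ |(B j j : ℝ)| := by
    rw [abs_of_nonneg (by positivity)]; exact_mod_cast hj
  calc (1 : ℝ) = 1 / 3 * 3 := by norm_num
    _ ≤ |c + u j| * |(B j j : ℝ)| :=
      mul_le_mul (one_third_le_abs_add_intCast ⟨hc.1, hc.2.trans (by norm_num)⟩ _) hBjj
        (by norm_num) (abs_nonneg _)

/-- If `B` is in Hermite normal form with `B j j ≥ 3`, `q ≥ 2`, and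
`a = (1/q)⌊q/2⌋ f_j`, then any integer translate `a + u` satisfying
`|⟨a + u, v i⟩| < 1` for all `i < j` (columns `v i` of `B`) fails `|⟨a + u, v j⟩| < 1`. -/
theorem stmt5 (n : ℕ) (B : Matrix (Fin n) (Fin n) ℤ)
    (hdet : B.det ≠ 0)
    (htri : ∀ i k : Fin n, k < i → B i k = 0)
    (hnonneg : ∀ i k : Fin n, 0 ≤ B i k)
    (hHNF : ∀ i k : Fin n, i < k → B i k < B k k)
    (j : Fin n) (hj : 3 ≤ B j j)
    (q : ℕ) (hq : 2 ≤ q)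
    (a : Fin n → ℝ)
    (hadef : a = fun i => if i = j then ((q / 2 : ℕ) : ℝ) / q else 0) :
    ∀ u : Fin n → ℤ,
      (∀ i : Fin n, i < j → |∑ i', (a i' + (u i' : ℝ)) * (B i' i : ℝ)| < 1) →
      ¬ (|∑ i', (a i' + (u i' : ℝ)) * (B i' j : ℝ)| < 1) :=
  stmt5_general n B hdet htri j hj q hq a hadef
end

section
/- Let v_1,...,v_m ∈ ℤⁿ be vectors contained in {±e'_1,...,±e'_n} for some ℝ-basis {e'_1,...,e'_n} of ℝⁿ consisting of integer vectors, and suppose the configuration is 2-regular: for every maximal linearly independent subset, the quotient of ℤⁿ by the subgroup it generates is 2-torsion. Then for every odd integer q ≥ 3, every class in (1/q)ℤⁿ/ℤⁿ has a representative u ∈ (1/q)ℤⁿ with |⟨u, v_j⟩| < 1 for all j. -/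
/-!
By 2-regularity, a maximal linearly independent subfamily of `v` spans a lattice containing `2ℤⁿ`,
and this lattice lies in the one spanned by the rows `e'ᵢ` of `E`. Hence `D * E = 2` for an
integer matrix `D`, so also `E * D = 2`: the values `⟨x, e'ᵢ⟩` of `x ∈ ℤⁿ` can be shifted
independently by arbitrary even integers. Writing `a = k / q`, the representative `a - k` has
`⟨a - k, e'ᵢ⟩ = zᵢ / q - zᵢ` with `zᵢ ∈ ℤ`, which is never an odd integer because `q` is odd;
an even shift moves each of these numbers into `(-1, 1)`.
-/

open Submodule Set Matrix

lemma Finset.exists_maximal_insert {α : Type*} [Finite α] [DecidableEq α]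
    (P : Finset α → Prop) (h₀ : P ∅) : ∃ s, P s ∧ ∀ j ∉ s, ¬ P (insert j s) := by
  obtain ⟨s, hs, hmax⟩ := (Set.toFinite {s : Finset α | P s}).exists_maximal ⟨∅, h₀⟩
  exact ⟨s, hs, fun j hj hPj =>
    hj (hmax hPj (Finset.subset_insert j s) (Finset.mem_insert_self j s))⟩

lemma Submodule.span_range_le_of_forall_eq_or_eq_neg {R M ι κ : Type*} [Ring R]
    [AddCommGroup M] [Module R M] {v : ι → M} {e : κ → M}
    (h : ∀ j, ∃ i, v j = e i ∨ v j = -e i) : span R (range v) ≤ span R (range e) := by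
  rw [span_le]
  rintro _ ⟨j, rfl⟩
  obtain ⟨i, hi | hi⟩ := h j
  · exact hi ▸ subset_span ⟨i, rfl⟩
  · exact hi ▸ neg_mem (subset_span ⟨i, rfl⟩)

lemma Matrix.mul_eq_smul_one_comm {R n : Type*} [CommRing R] [IsDomain R] [Fintype n]
    [DecidableEq n] {A B : Matrix n n R} {c : R} (hc : c ≠ 0) (h : A * B = c • 1) :
    B * A = c • 1 := by
  have hdet : B.det ≠ 0 := by
    have := congrArg det h
    rw [det_mul, det_smul, det_one, mul_one] at this
    exact right_ne_zero_of_mul (this ▸ pow_ne_zero _ hc)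
  have hzero : (B * A - c • 1) * B = 0 := by
    rw [sub_mul, Matrix.mul_assoc, h, Matrix.mul_smul, Matrix.smul_mul, Matrix.mul_one,
      Matrix.one_mul, sub_self]
  have hsmul : B.det • (B * A - c • 1) = 0 := calc
    _ = (B * A - c • 1) * (B * adjugate B) := by
      rw [mul_adjugate, Matrix.mul_smul, Matrix.mul_one]
    _ = 0 := by rw [← Matrix.mul_assoc, hzero, Matrix.zero_mul]
  exact sub_eq_zero.mp ((smul_eq_zero.mp hsmul).resolve_left hdet)

lemma Matrix.exists_mulVec_eq_smul {R n : Type*} [CommRing R] [IsDomain R] [Fintype n]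
    [DecidableEq n] {E : Matrix n n R} {c : R} (hc : c ≠ 0)
    (h : ∀ x : n → R, c • x ∈ span R (range E)) (w : n → R) : ∃ y, E *ᵥ y = c • w := by
  have hrows : ∀ k, ∃ d : n → R, d ᵥ* E = c • Pi.single k 1 := fun k => by
    simpa [vecMul_eq_sum] using (mem_span_range_iff_exists_fun R).mp (h (Pi.single k 1))
  choose D hD using hrows
  have hDE : Matrix.of D * E = c • 1 := by
    ext k t
    simpa [mul_apply, vecMul, dotProduct, Matrix.one_apply, Pi.single_apply, eq_comm]
      using congrFun (hD k) t
  refine ⟨Matrix.of D *ᵥ w, ?_⟩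
  rw [mulVec_mulVec, mul_eq_smul_one_comm hc hDE, smul_mulVec, one_mulVec]

lemma exists_int_abs_sub_two_mul_lt_one {t : ℝ} (ht : ∀ k : ℤ, Odd k → t ≠ k) :
    ∃ w : ℤ, |t - 2 * w| < 1 := by
  have hle : |t - 2 * round (t / 2)| ≤ 1 := by
    have := abs_sub_round (t / 2)
    rw [show t - 2 * round (t / 2) = 2 * (t / 2 - round (t / 2)) by ring, abs_mul, abs_two]
    linarith
  refine ⟨round (t / 2), lt_of_le_of_ne hle fun heq => ?_⟩
  rcases (abs_eq zero_le_one).mp heq with h | h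
  · exact ht (2 * round (t / 2) + 1) (even_two_mul _).add_one (by push_cast; linarith)
  · exact ht (2 * round (t / 2) - 1) ((even_two_mul _).sub_odd odd_one) (by push_cast; linarith)

lemma div_sub_self_ne_odd {q : ℕ} (hq : Odd q) (z k : ℤ) (hk : Odd k) :
    (z : ℝ) / q - z ≠ k := by
  intro h
  have hq0 : (q : ℝ) ≠ 0 := Nat.cast_ne_zero.mpr hq.pos.ne'
  have hz : (1 - (q : ℤ)) * z = q * k := by
    have : ((1 - (q : ℤ)) * z : ℤ) = ((q * k : ℤ) : ℝ) := by
      push_cast; rw [← h]; field_simp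
    exact_mod_cast this
  have heven : Even ((1 - (q : ℤ)) * z) := (odd_one.sub_odd (by exact_mod_cast hq)).mul_right z
  exact Int.not_even_iff_odd.mpr ((show Odd (q : ℤ) by exact_mod_cast hq).mul hk) (hz ▸ heven)

lemma exists_abs_sum_div_sub_mul_lt_one {ι : Type*} [Fintype ι] {q : ℕ} (hq : Odd q)
    (E : Matrix ι ι ℤ) (hE : ∀ w, ∃ y, E *ᵥ y = 2 • w) (k : ι → ℤ) :
    ∃ x : ι → ℤ, ∀ i, |∑ t, ((k t : ℝ) / q - x t) * E i t| < 1 := by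
  have hw : ∀ i, ∃ w : ℤ, |((E *ᵥ k) i : ℝ) / q - (E *ᵥ k) i - 2 * w| < 1 := fun i =>
    exists_int_abs_sub_two_mul_lt_one (div_sub_self_ne_odd hq _)
  choose w hw using hw
  obtain ⟨y, hy⟩ := hE w
  refine ⟨k + y, fun i => ?_⟩
  have hyi : ((E *ᵥ y) i : ℝ) = 2 * w i := by rw [hy]; simp
  convert hw i using 2
  rw [← hyi]
  simp only [mulVec, dotProduct, Pi.add_apply, Int.cast_add, Int.cast_sum, Int.cast_mul,
    Finset.sum_div]
  rw [← Finset.sum_sub_distrib, ← Finset.sum_sub_distrib]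
  exact Finset.sum_congr rfl fun t _ => by ring

theorem stmt6_general (n m : ℕ) (v : Fin m → Fin n → ℤ)
    (e' : Fin n → Fin n → ℤ)
    (hsub : ∀ j, ∃ i, v j = e' i ∨ v j = -e' i)
    (h2reg : ∀ s : Finset (Fin m),
      LinearIndependent ℝ (fun j : s => fun i => (v j i : ℝ)) →
      (∀ j ∉ s, ¬ LinearIndependent ℝ
        (fun j' : (insert j s : Finset (Fin m)) => fun i => (v j' i : ℝ))) →
      ∀ x : Fin n → ℤ, (2 : ℤ) • x ∈ Submodule.span ℤ (v '' s))
    (q : ℕ) (hodd : Odd q) :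
    ∀ a : Fin n → ℝ, (∀ i, ∃ k : ℤ, a i = (k : ℝ) / q) →
      ∃ x : Fin n → ℤ, ∀ j, |∑ i, (a i - (x i : ℝ)) * (v j i : ℝ)| < 1 := by
  intro a ha
  choose k hk using ha
  obtain ⟨s, hs, hmax⟩ := Finset.exists_maximal_insert
    (fun s : Finset (Fin m) => LinearIndependent ℝ fun j : s => fun i => (v j i : ℝ))
    linearIndependent_empty_type
  have h2 (x : Fin n → ℤ) : (2 : ℤ) • x ∈ span ℤ (range e') :=
    span_range_le_of_forall_eq_or_eq_neg hsub
      (span_mono (image_subset_range v s) (h2reg s hs hmax x))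
  obtain ⟨x, hx⟩ := exists_abs_sum_div_sub_mul_lt_one hodd e'
    (Matrix.exists_mulVec_eq_smul two_ne_zero h2) k
  refine ⟨x, fun j => ?_⟩
  obtain ⟨i, hi | hi⟩ := hsub j
  · simpa only [hk, hi] using hx i
  · simpa only [hk, hi, Pi.neg_apply, Int.cast_neg, mul_neg, Finset.sum_neg_distrib, abs_neg]
      using hx i

/-- Proposition 6.1: If `v 1, ..., v m ∈ ℤⁿ` are contained in
`{±e'_1, ..., ±e'_n}` for an ℝ-basis `e'` of integer vectors, and the configuration is
2-regular (every maximal linearly independent subset spans a sublattice with 2-torsion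
quotient), then for every odd `q ≥ 3` each class of `(1/q)ℤⁿ/ℤⁿ` has a representative
in the open polytope `{u : |⟨u, v j⟩| < 1 ∀ j}`. -/
theorem stmt6 (n m : ℕ) (v : Fin m → Fin n → ℤ)
    (e' : Fin n → Fin n → ℤ)
    (hbasis : LinearIndependent ℝ (fun i => fun k => (e' i k : ℝ)))
    (hsub : ∀ j, ∃ i, v j = e' i ∨ v j = -e' i)
    (h2reg : ∀ s : Finset (Fin m),
      LinearIndependent ℝ (fun j : s => fun i => (v j i : ℝ)) →
      (∀ j ∉ s, ¬ LinearIndependent ℝ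
        (fun j' : (insert j s : Finset (Fin m)) => fun i => (v j' i : ℝ))) →
      ∀ x : Fin n → ℤ, (2 : ℤ) • x ∈ Submodule.span ℤ (v '' s))
    (q : ℕ) (hq : 3 ≤ q) (hodd : Odd q) :
    ∀ a : Fin n → ℝ, (∀ i, ∃ k : ℤ, a i = (k : ℝ) / q) →
      ∃ x : Fin n → ℤ, ∀ j, |∑ i, (a i - (x i : ℝ)) * (v j i : ℝ)| < 1 :=
  stmt6_general n m v e' hsub h2reg q hodd
end

section
/- Let v_1,...,v_m ∈ ℤⁿ be integer vectors each satisfying |v_j|_1 ≤ 2 (sum of absolute values of coordinates at most 2). Then for every odd integer q ≥ 3 and every a ∈ (1/q)ℤⁿ, there exists x ∈ ℤⁿ with |⟨a - x, v_j⟩| < 1 for all j. In particular, the open region { u ∈ ℝⁿ : |⟨u, v_j⟩| < 1 ∀j } contains the open cube (-1/2, 1/2)ⁿ and hence a representative of every class in (1/q)ℤⁿ/ℤⁿ for odd q. -/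
/-!
Each `|⟨u, v⟩|` is at most `∑ |u i| |v i|`, which is below `(1/2) ∑ |v i| ≤ 1` as soon as every
coordinate of `u` lies in the open cube `(-1/2, 1/2)`. A point `k / q` with `q` odd is never a
half-integer, so rounding its coordinates moves `a ∈ (1/q)ℤⁿ` into that open cube.
-/

open Finset

lemma abs_sub_round_div_lt_half_of_odd (k : ℤ) {q : ℕ} (hq : Odd q) :
    |(k : ℝ) / q - round ((k : ℝ) / q)| < 1 / 2 := by
  refine (abs_sub_round _).lt_of_ne fun h => Nat.not_even_iff_odd.mpr hq ?_
  set r := round ((k : ℝ) / q)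
  have hq0 : (0 : ℝ) < q := by exact_mod_cast hq.pos
  have hscaled : |(k : ℝ) / q - r| * q = |(k : ℝ) - q * r| := by
    rw [← abs_of_pos hq0, ← abs_mul, abs_of_pos hq0, sub_mul, div_mul_cancel₀ _ hq0.ne', mul_comm]
  have htwice : (q : ℤ) = |k - q * r| + |k - q * r| := by
    have : (q : ℝ) = |(k : ℝ) - q * r| + |(k : ℝ) - q * r| := by
      rw [← hscaled, h]; ring
    exact_mod_cast this
  exact (Int.even_coe_nat q).mp ⟨_, htwice⟩

lemma abs_sum_mul_lt_one_of_abs_lt_half {ι : Type*} [Fintype ι] (u w : ι → ℝ)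
    (hu : ∀ i, |u i| < 1 / 2) (hw : ∑ i, |w i| ≤ 2) : |∑ i, u i * w i| < 1 := by
  by_cases hzero : ∀ i, w i = 0
  · simp [hzero]
  obtain ⟨i₀, hi₀⟩ := not_forall.mp hzero
  calc |∑ i, u i * w i| ≤ ∑ i, |u i| * |w i| := by
        simpa only [abs_mul] using abs_sum_le_sum_abs (fun i => u i * w i) univ
    _ < ∑ i, 1 / 2 * |w i| :=
        sum_lt_sum (fun i _ => mul_le_mul_of_nonneg_right (hu i).le (abs_nonneg _))
          ⟨i₀, mem_univ _, mul_lt_mul_of_pos_right (hu i₀) (abs_pos.mpr hi₀)⟩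
    _ ≤ 1 := by rw [← mul_sum]; linarith

/-- Proposition 6.2: If each `v j ∈ ℤⁿ` has ℓ¹-norm at most 2 (binet),
then for every odd `q ≥ 3` each class of `(1/q)ℤⁿ/ℤⁿ` has a representative in the open
polytope `{u : |⟨u, v j⟩| < 1 ∀ j}`; moreover this polytope contains the open cube
`(-1/2, 1/2)ⁿ`. -/
theorem stmt7 (n m : ℕ) (v : Fin m → Fin n → ℤ)
    (hbinet : ∀ j, ∑ i, |v j i| ≤ 2) :
    (∀ u : Fin n → ℝ, (∀ i, |u i| < 1 / 2) →
      ∀ j, |∑ i, u i * (v j i : ℝ)| < 1) ∧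
    ∀ q : ℕ, 3 ≤ q → Odd q →
      ∀ a : Fin n → ℝ, (∀ i, ∃ k : ℤ, a i = (k : ℝ) / q) →
        ∃ x : Fin n → ℤ, ∀ j, |∑ i, (a i - (x i : ℝ)) * (v j i : ℝ)| < 1 := by
  have hcube : ∀ u : Fin n → ℝ, (∀ i, |u i| < 1 / 2) →
      ∀ j, |∑ i, u i * (v j i : ℝ)| < 1 := fun u hu j =>
    abs_sum_mul_lt_one_of_abs_lt_half u _ hu (by exact_mod_cast hbinet j)
  refine ⟨hcube, fun q _ hodd a ha => ⟨fun i => round (a i), hcube _ fun i => ?_⟩⟩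
  obtain ⟨k, hk⟩ := ha i
  simpa only [hk] using abs_sub_round_div_lt_half_of_odd k hodd
end

section
/- The configuration Σ(1) = {e_1, e_2, e_3 + e_4, e_3 - e_4, e_1 + e_2 - e_3, e_1 - e_2 + e_3, -e_1 + e_2 + e_3} in ℤ⁴ is 2-regular: for every maximal linearly independent subset S of Σ(1), the quotient group ℤ⁴/⟨S⟩ is 2-torsion (every element has order dividing 2), i.e., each such subset spans a sublattice of ℤ⁴ of index 1 or 2. -/
/-!
For a nonsingular integer matrix `M`, twice every vector lies in the row lattice of `M` as soon as
`2 • M⁻¹ = (2 / det M) • adjugate M` is integral, for then `2 • x = (x ᵥ* 2 M⁻¹) ᵥ* M`. Comparing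
`det M` with `2` alone would not do: e.g. `e₃ + e₄, e₃ - e₄, e₁ + e₂ - e₃, e₁ - e₂ + e₃` have
determinant `4` and quotient `(ℤ/2)²`. Integrality of `2 M⁻¹` is checked by computation for the
`35` sorted four-element subsets of `Σ(1)`; reordering the rows changes neither the span nor
linear independence.
-/

open Matrix

namespace Matrix

variable {R n : Type*} [Fintype n] [DecidableEq n]

theorem det_fin_four [CommRing R] (M : Matrix (Fin 4) (Fin 4) R) : M.det =
    M 0 0 * M 1 1 * M 2 2 * M 3 3 - M 0 0 * M 1 1 * M 2 3 * M 3 2 -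
    M 0 0 * M 1 2 * M 2 1 * M 3 3 + M 0 0 * M 1 2 * M 2 3 * M 3 1 +
    M 0 0 * M 1 3 * M 2 1 * M 3 2 - M 0 0 * M 1 3 * M 2 2 * M 3 1 -
    M 0 1 * M 1 0 * M 2 2 * M 3 3 + M 0 1 * M 1 0 * M 2 3 * M 3 2 +
    M 0 1 * M 1 2 * M 2 0 * M 3 3 - M 0 1 * M 1 2 * M 2 3 * M 3 0 -
    M 0 1 * M 1 3 * M 2 0 * M 3 2 + M 0 1 * M 1 3 * M 2 2 * M 3 0 +
    M 0 2 * M 1 0 * M 2 1 * M 3 3 - M 0 2 * M 1 0 * M 2 3 * M 3 1 -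
    M 0 2 * M 1 1 * M 2 0 * M 3 3 + M 0 2 * M 1 1 * M 2 3 * M 3 0 +
    M 0 2 * M 1 3 * M 2 0 * M 3 1 - M 0 2 * M 1 3 * M 2 1 * M 3 0 -
    M 0 3 * M 1 0 * M 2 1 * M 3 2 + M 0 3 * M 1 0 * M 2 2 * M 3 1 +
    M 0 3 * M 1 1 * M 2 0 * M 3 2 - M 0 3 * M 1 1 * M 2 2 * M 3 0 -
    M 0 3 * M 1 2 * M 2 0 * M 3 1 + M 0 3 * M 1 2 * M 2 1 * M 3 0 := by
  simp only [det_succ_row_zero, Fin.sum_univ_succ, Fin.sum_univ_zero]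
  simp [Fin.succAbove, submatrix]
  ring

theorem smul_mem_span_row_of_mul_eq_smul_one [CommSemiring R] {M N : Matrix n n R} {c : R}
    (hNM : N * M = c • 1) (x : n → R) : c • x ∈ Submodule.span R (Set.range M.row) := by
  rw [← range_vecMulLinear]
  refine ⟨x ᵥ* N, ?_⟩
  rw [vecMulLinear_apply, vecMul_vecMul, hNM, vecMul_smul, vecMul_one]

theorem exists_mul_eq_smul_one_of_dvd_mul_adjugate [CommRing R] [IsDomain R] {M : Matrix n n R}
    {c : R} (hM : M.det ≠ 0) (h : ∀ i j, M.det ∣ c * adjugate M i j) :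
    ∃ N : Matrix n n R, N * M = c • 1 := by
  choose N hN using h
  refine ⟨of N, smul_right_injective _ hM ?_⟩
  have hdetN : M.det • of N = c • adjugate M := by
    ext i j
    simp [hN]
  dsimp only
  rw [← smul_mul_assoc, hdetN, smul_mul_assoc, adjugate_mul, smul_comm]

theorem det_ne_zero_of_linearIndependent_intCast {K : Type*} [Field K] [CharZero K]
    {M : Matrix n n ℤ} (h : LinearIndependent K (fun k i => (M k i : K))) : M.det ≠ 0 := by
  have hunit : IsUnit (M.map fun a => (a : K)) := linearIndependent_rows_iff_isUnit.mp h
  have hdet := ((isUnit_iff_isUnit_det _).mp hunit).ne_zero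
  rwa [← Int.cast_det, Int.cast_ne_zero] at hdet

end Matrix

def sigmaOne : Fin 7 → Fin 4 → ℤ :=
  ![![1,0,0,0], ![0,1,0,0], ![0,0,1,1], ![0,0,1,-1], ![1,1,-1,0], ![1,-1,1,0], ![-1,1,1,0]]

theorem sigmaOne_det_dvd_two_mul_adjugate {g : Fin 4 → Fin 7} (hg : StrictMono g)
    (hdet : (of (sigmaOne ∘ g)).det ≠ 0) (i j : Fin 4) :
    (of (sigmaOne ∘ g)).det ∣ 2 * adjugate (of (sigmaOne ∘ g)) i j := by
  suffices ∀ a b c d : Fin 7, a < b → b < c → c < d → let M := of (sigmaOne ∘ ![a, b, c, d]);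
      M.det ≠ 0 → ∀ i j, M.det ∣ 2 * (M.updateRow j (Pi.single i 1)).det by
    have hg_eq : g = ![g 0, g 1, g 2, g 3] := by
      ext k
      fin_cases k <;> rfl
    rw [hg_eq] at hdet ⊢
    rw [adjugate_apply]
    exact this _ _ _ _ (hg (by decide)) (hg (by decide)) (hg (by decide)) hdet i j
  simp only [det_fin_four]
  decide

theorem two_smul_mem_span_sigmaOne_of_strictMono {g : Fin 4 → Fin 7} (hg : StrictMono g)
    (hli : LinearIndependent ℝ (fun k i => (sigmaOne (g k) i : ℝ))) (x : Fin 4 → ℤ) :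
    (2 : ℤ) • x ∈ Submodule.span ℤ (Set.range (sigmaOne ∘ g)) := by
  have hdet := det_ne_zero_of_linearIndependent_intCast (M := of (sigmaOne ∘ g)) hli
  obtain ⟨N, hNM⟩ :=
    exists_mul_eq_smul_one_of_dvd_mul_adjugate hdet (sigmaOne_det_dvd_two_mul_adjugate hg hdet)
  exact smul_mem_span_row_of_mul_eq_smul_one hNM x

/-- Example 6.4, 2-regularity: every 4-element linearly independent
subset of the configuration spans a sublattice of ℤ⁴ with 2-torsion quotient. -/
theorem stmt9 (V : Fin 7 → Fin 4 → ℤ)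
    (hV : V = ![![1,0,0,0], ![0,1,0,0], ![0,0,1,1], ![0,0,1,-1],
                ![1,1,-1,0], ![1,-1,1,0], ![-1,1,1,0]]) :
    ∀ f : Fin 4 → Fin 7,
      LinearIndependent ℝ (fun k => fun i => (V (f k) i : ℝ)) →
      ∀ x : Fin 4 → ℤ, (2 : ℤ) • x ∈ Submodule.span ℤ (Set.range (V ∘ f)) := by
  intro f hli x
  obtain rfl : V = sigmaOne := hV
  set σ := Tuple.sort f
  have hli_sorted : LinearIndependent ℝ (fun k i => (sigmaOne ((f ∘ σ) k) i : ℝ)) :=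
    hli.comp σ σ.injective
  have hsorted : StrictMono (f ∘ σ) :=
    (Tuple.monotone_sort f).strictMono_of_injective
      (Function.Injective.of_comp (f := fun m i => (sigmaOne m i : ℝ)) hli_sorted.injective)
  rw [← σ.surjective.range_comp]
  exact two_smul_mem_span_sigmaOne_of_strictMono hsorted hli_sorted x
end

section
/- Let v_1,...,v_m ∈ ℤ² be a spanning configuration of primitive vectors that is 2-regular: for every pair of linearly independent vectors v_i, v_j in the configuration, the index [ℤ² : ⟨v_i, v_j⟩] is 1 or 2. Then for every odd integer q ≥ 3 and every a ∈ (1/q)ℤ², there exists x ∈ ℤ² with |⟨a - x, v_j⟩| < 1 for all j = 1,...,m. -/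
/-!
Choose a basis `b₁, b₂` of `ℤ²` such that every `v j` is `α • b₁ + β • b₂` with `|α|, |β| ≤ 1`.
If two of the vectors have determinant `2`, they are congruent mod 2, and half their sum and half
their difference form such a basis; otherwise all determinants are `0` or `±1`, and a unimodular
pair of the vectors (or a completion of a single one) already is one.

For `a = c / q`, write `⟨c, bᵢ⟩ = sᵢ + q kᵢ` with `|sᵢ| ≤ (q - 1) / 2`, which is possible because
`q` is odd, and take `x` with `⟨x, bᵢ⟩ = kᵢ`. Then `q ⟨a - x, α b₁ + β b₂⟩ = α s₁ + β s₂` has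
absolute value at most `q - 1`.
-/

section Wedge

variable {R : Type*} [CommRing R]

def wedge (x y : Fin 2 → R) : R := x 0 * y 1 - x 1 * y 0

theorem wedge_anticomm (x y : Fin 2 → R) : wedge y x = -wedge x y := by
  simp only [wedge]; ring

@[simp]
theorem wedge_self (x : Fin 2 → R) : wedge x x = 0 := by
  simp only [wedge]; ring

@[simp]
theorem wedge_zero_left (x : Fin 2 → R) : wedge 0 x = 0 := by
  simp [wedge]

@[simp]
theorem wedge_zero_right (x : Fin 2 → R) : wedge x 0 = 0 := by
  simp [wedge]

@[simp]
theorem wedge_add_left (x y w : Fin 2 → R) : wedge (x + y) w = wedge x w + wedge y w := by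
  simp only [wedge, Pi.add_apply]; ring

@[simp]
theorem wedge_add_right (x y w : Fin 2 → R) : wedge w (x + y) = wedge w x + wedge w y := by
  simp only [wedge, Pi.add_apply]; ring

@[simp]
theorem wedge_sub_right (x y w : Fin 2 → R) : wedge w (x - y) = wedge w x - wedge w y := by
  simp only [wedge, Pi.sub_apply]; ring

@[simp]
theorem wedge_smul_left (s : R) (x w : Fin 2 → R) : wedge (s • x) w = s * wedge x w := by
  simp only [wedge, Pi.smul_apply, smul_eq_mul]; ring

@[simp]
theorem wedge_smul_right (s : R) (x w : Fin 2 → R) : wedge w (s • x) = s * wedge w x := by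
  simp only [wedge, Pi.smul_apply, smul_eq_mul]; ring

theorem wedge_smul_eq_add (p r w : Fin 2 → R) :
    wedge p r • w = wedge w r • p + wedge p w • r := by
  ext i; fin_cases i <;> simp [wedge] <;> ring

theorem eq_smul_add_smul_of_wedge_eq_one {p r : Fin 2 → R} (h : wedge p r = 1) (w : Fin 2 → R) :
    w = wedge w r • p + wedge p w • r := by
  simpa [h] using wedge_smul_eq_add p r w

end Wedge

theorem intCast_wedge {R : Type*} [CommRing R] (x y : Fin 2 → ℤ) :
    ((wedge x y : ℤ) : R) = wedge (fun i => (x i : R)) (fun i => (y i : R)) := by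
  simp [wedge]

theorem linearIndependent_of_wedge_ne_zero {K : Type*} [Field K] {x y : Fin 2 → K}
    (h : wedge x y ≠ 0) : LinearIndependent K ![x, y] := by
  refine LinearIndependent.pair_iff.mpr fun s t hst => ⟨?_, ?_⟩
  · simpa [h, wedge_anticomm x y] using congrArg (wedge · y) hst
  · simpa [h] using congrArg (wedge x) hst

theorem exists_wedge_eq_one {u : Fin 2 → ℤ} (hu : IsCoprime (u 0) (u 1)) :
    ∃ z, wedge u z = 1 := by
  obtain ⟨a, b, hab⟩ := hu
  exact ⟨![-b, a], by simp [wedge]; linear_combination hab⟩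

theorem isCoprime_of_eq_smul_add_smul {w p r : Fin 2 → ℤ} {α β : ℤ}
    (hw : IsCoprime (w 0) (w 1)) (h : w = α • p + β • r) : IsCoprime α β := by
  obtain ⟨a, b, hab⟩ := hw
  subst h
  exact ⟨a * p 0 + b * p 1, a * r 0 + b * r 1, by simp at hab; linear_combination hab⟩

theorem IsCoprime.not_two_dvd_of_two_dvd {a b : ℤ} (h : IsCoprime a b) (hb : 2 ∣ b) : ¬ 2 ∣ a :=
  fun ha => by simpa [Int.isUnit_iff] using h.isUnit_of_dvd' ha hb

theorem exists_eq_add_two_smul {u w : Fin 2 → ℤ} (hu : IsCoprime (u 0) (u 1))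
    (hw : IsCoprime (w 0) (w 1)) (heven : Even (wedge u w)) : ∃ d, w = u + (2 : ℤ) • d := by
  obtain ⟨z, hz⟩ := exists_wedge_eq_one hu
  have hwz := eq_smul_add_smul_of_wedge_eq_one hz w
  obtain ⟨t, ht⟩ : Odd (wedge w z) := Int.not_even_iff_odd.mp <| by
    simpa [even_iff_two_dvd] using (isCoprime_of_eq_smul_add_smul hw hwz).not_two_dvd_of_two_dvd
      (even_iff_two_dvd.mp heven)
  obtain ⟨s, hs⟩ := heven
  refine ⟨t • u + s • z, ?_⟩
  rw [hwz, ht, hs]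
  module

def unitBox (b₁ b₂ : Fin 2 → ℤ) : Set (Fin 2 → ℤ) :=
  {w | ∃ α β : ℤ, |α| ≤ 1 ∧ |β| ≤ 1 ∧ α • b₁ + β • b₂ = w}

section UnitBox

variable {b₁ b₂ w : Fin 2 → ℤ}

theorem mem_unitBox_of_abs_wedge_le_one (h : wedge b₁ b₂ = 1) (h₁ : |wedge w b₂| ≤ 1)
    (h₂ : |wedge b₁ w| ≤ 1) : w ∈ unitBox b₁ b₂ :=
  ⟨_, _, h₁, h₂, (eq_smul_add_smul_of_wedge_eq_one h w).symm⟩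

theorem mem_unitBox_of_abs_wedge_le_two (h : wedge b₁ b₂ = 1) (hw : IsCoprime (w 0) (w 1))
    (h₁ : |wedge w (b₁ - b₂)| ≤ 2) (h₂ : |wedge w (b₁ + b₂)| ≤ 2) : w ∈ unitBox b₁ b₂ := by
  have hcoord := eq_smul_add_smul_of_wedge_eq_one h w
  set α := wedge w b₂
  set β := wedge b₁ w
  have hsub : wedge w (b₁ - b₂) = -β - α := by rw [wedge_sub_right, wedge_anticomm b₁ w]
  have hadd : wedge w (b₁ + b₂) = α - β := by rw [wedge_add_right, wedge_anticomm b₁ w]; ring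
  have hpar : 2 ∣ β → ¬ 2 ∣ α := (isCoprime_of_eq_smul_add_smul hw hcoord).not_two_dvd_of_two_dvd
  rw [hsub, abs_le] at h₁
  rw [hadd, abs_le] at h₂
  refine ⟨α, β, abs_le.mpr ⟨?_, ?_⟩, abs_le.mpr ⟨?_, ?_⟩, hcoord.symm⟩ <;> omega

end UnitBox

section Classification

variable {ι : Type*} {v : ι → Fin 2 → ℤ}

theorem exists_forall_mem_unitBox_of_wedge_eq_two (hprim : ∀ i, IsCoprime (v i 0) (v i 1))
    (hwedge : ∀ i j, |wedge (v i) (v j)| ≤ 2) {i j : ι} (hij : wedge (v i) (v j) = 2) :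
    ∃ b₁ b₂, wedge b₁ b₂ = 1 ∧ ∀ l, v l ∈ unitBox b₁ b₂ := by
  obtain ⟨d, hd⟩ := exists_eq_add_two_smul (hprim i) (hprim j) ⟨1, by omega⟩
  have hi : v i = (v i + d) - d := by abel
  have hj : v j = (v i + d) + d := by rw [hd]; module
  have hid : wedge (v i) d = 1 := by
    simp only [hd, wedge_add_right, wedge_self, wedge_smul_right] at hij
    omega
  have hb : wedge (v i + d) d = 1 := by simpa using hid
  refine ⟨v i + d, d, hb, fun l => mem_unitBox_of_abs_wedge_le_two hb (hprim l) ?_ ?_⟩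
  · rw [← hi]; exact hwedge l i
  · rw [← hj]; exact hwedge l j

theorem exists_forall_mem_unitBox_of_wedge_eq_zero (hprim : ∀ i, IsCoprime (v i 0) (v i 1))
    (hwedge : ∀ i j, wedge (v i) (v j) = 0) :
    ∃ b₁ b₂, wedge b₁ b₂ = 1 ∧ ∀ l, v l ∈ unitBox b₁ b₂ := by
  cases isEmpty_or_nonempty ι with
  | inl _ => exact ⟨![1, 0], ![0, 1], by simp [wedge], isEmptyElim⟩
  | inr h =>
    obtain ⟨i⟩ := h
    obtain ⟨z, hz⟩ := exists_wedge_eq_one (hprim i)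
    refine ⟨v i, z, hz, fun l => mem_unitBox_of_abs_wedge_le_one hz ?_ (by simp [hwedge])⟩
    have hl := eq_smul_add_smul_of_wedge_eq_one hz (v l)
    rw [hwedge i l] at hl
    have hunit := isCoprime_of_eq_smul_add_smul (hprim l) hl
    rw [isCoprime_zero_right, Int.isUnit_iff] at hunit
    rcases hunit with h | h <;> simp [h]

theorem exists_wedge_eq_one_forall_mem_unitBox (hprim : ∀ i, IsCoprime (v i 0) (v i 1))
    (hwedge : ∀ i j, |wedge (v i) (v j)| ≤ 2) :
    ∃ b₁ b₂, wedge b₁ b₂ = 1 ∧ ∀ l, v l ∈ unitBox b₁ b₂ := by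
  by_cases h₂ : ∃ i j, wedge (v i) (v j) = 2
  · obtain ⟨i, j, hij⟩ := h₂
    exact exists_forall_mem_unitBox_of_wedge_eq_two hprim hwedge hij
  push Not at h₂
  have hle : ∀ i j, |wedge (v i) (v j)| ≤ 1 := fun i j => by
    have hij := h₂ i j
    have hji := h₂ j i
    have hbound := abs_le.mp (hwedge i j)
    rw [wedge_anticomm (v i)] at hji
    exact abs_le.mpr ⟨by omega, by omega⟩
  by_cases h₁ : ∃ i j, wedge (v i) (v j) = 1
  · obtain ⟨i, j, hij⟩ := h₁
    exact ⟨v i, v j, hij, fun l => mem_unitBox_of_abs_wedge_le_one hij (hle l j) (hle i l)⟩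
  push Not at h₁
  refine exists_forall_mem_unitBox_of_wedge_eq_zero hprim fun i j => ?_
  have hij := h₁ i j
  have hji := h₁ j i
  have hbound := abs_le.mp (hle i j)
  rw [wedge_anticomm (v i)] at hji
  omega

end Classification

theorem natAbs_wedge_dvd_index {x : Fin 2 → ℤ} (hx : IsCoprime (x 0) (x 1)) (y : Fin 2 → ℤ) :
    (wedge x y).natAbs ∣ (Submodule.span ℤ ({x, y} : Set (Fin 2 → ℤ))).toAddSubgroup.index := by
  set n := (wedge x y).natAbs
  let f : (Fin 2 → ℤ) →+ ZMod n := AddMonoidHom.mk' (fun w => ((wedge x w : ℤ) : ZMod n)) (by simp)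
  have hsurj : Function.Surjective f := fun t => by
    obtain ⟨z, hz⟩ := exists_wedge_eq_one hx
    obtain ⟨t, rfl⟩ := ZMod.intCast_surjective t
    exact ⟨t • z, by simp only [f, AddMonoidHom.mk'_apply, wedge_smul_right, hz, mul_one]⟩
  have hker : (Submodule.span ℤ ({x, y} : Set (Fin 2 → ℤ))).toAddSubgroup ≤ f.ker := by
    rw [Submodule.span_int_eq_addSubgroupClosure, AddSubgroup.closure_le]
    refine Set.insert_subset_iff.mpr ⟨by simp [f], Set.singleton_subset_iff.mpr ?_⟩
    simp [f, ZMod.intCast_zmod_eq_zero_iff_dvd, n]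
  have hindex : f.ker.index = n := by
    rw [AddSubgroup.index_ker, AddMonoidHom.range_eq_top.mpr hsurj, AddSubgroup.card_top,
      Nat.card_zmod]
  exact hindex ▸ AddSubgroup.index_dvd_of_le hker

theorem abs_wedge_le_two {x y : Fin 2 → ℤ} (hx : IsCoprime (x 0) (x 1))
    (h : (Submodule.span ℤ ({x, y} : Set (Fin 2 → ℤ))).toAddSubgroup.index = 1 ∨
      (Submodule.span ℤ ({x, y} : Set (Fin 2 → ℤ))).toAddSubgroup.index = 2) :
    |wedge x y| ≤ 2 := by
  have hdvd := natAbs_wedge_dvd_index hx y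
  rw [Int.abs_eq_natAbs]
  rcases h with h | h <;> rw [h] at hdvd <;> have := Nat.le_of_dvd (by norm_num) hdvd <;> omega

theorem exists_two_mul_abs_sub_mul_lt {q : ℕ} (hq : Odd q) (n : ℤ) :
    ∃ k : ℤ, 2 * |n - q * k| < q := by
  obtain ⟨k, hk⟩ := Int.dvd_bmod_sub_self (x := n) (m := q)
  refine ⟨-k, ?_⟩
  have hlow := Int.le_bmod (x := n) hq.pos
  have hhigh := Int.bmod_lt (x := n) hq.pos
  have hs : n - q * -k = Int.bmod n q := by linarith
  obtain ⟨t, rfl⟩ := hq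
  rw [hs]
  rcases abs_cases (Int.bmod n (2 * t + 1)) with ⟨h, -⟩ | ⟨h, -⟩ <;> rw [h] <;> push_cast at * <;>
    omega

theorem exists_dotProduct_eq {R : Type*} [CommRing R] {b₁ b₂ : Fin 2 → R} (hb : wedge b₁ b₂ = 1)
    (k₁ k₂ : R) : ∃ x : Fin 2 → R, x ⬝ᵥ b₁ = k₁ ∧ x ⬝ᵥ b₂ = k₂ := by
  simp only [wedge] at hb
  refine ⟨![k₁ * b₂ 1 - k₂ * b₁ 1, k₂ * b₁ 0 - k₁ * b₂ 0], ?_, ?_⟩ <;>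
    simp only [dotProduct, Fin.sum_univ_two, Matrix.cons_val_zero, Matrix.cons_val_one]
  · linear_combination k₁ * hb
  · linear_combination k₂ * hb

theorem exists_forall_abs_dotProduct_lt {b₁ b₂ : Fin 2 → ℤ} (hb : wedge b₁ b₂ = 1) {q : ℕ}
    (hq : Odd q) (c : Fin 2 → ℤ) :
    ∃ x : Fin 2 → ℤ, ∀ w ∈ unitBox b₁ b₂, |(c - (q : ℤ) • x) ⬝ᵥ w| < q := by
  obtain ⟨k₁, hk₁⟩ := exists_two_mul_abs_sub_mul_lt hq (c ⬝ᵥ b₁)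
  obtain ⟨k₂, hk₂⟩ := exists_two_mul_abs_sub_mul_lt hq (c ⬝ᵥ b₂)
  obtain ⟨x, hx₁, hx₂⟩ := exists_dotProduct_eq hb k₁ k₂
  refine ⟨x, ?_⟩
  rintro _ ⟨α, β, hα, hβ, rfl⟩
  have hsplit : (c - (q : ℤ) • x) ⬝ᵥ (α • b₁ + β • b₂) =
      α * (c ⬝ᵥ b₁ - q * k₁) + β * (c ⬝ᵥ b₂ - q * k₂) := by
    simp only [dotProduct_add, dotProduct_smul, sub_dotProduct, smul_dotProduct, hx₁, hx₂,
      smul_eq_mul]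
  have habs {γ : ℤ} (hγ : |γ| ≤ 1) (s : ℤ) : |γ * s| ≤ |s| := by
    rw [abs_mul]; exact mul_le_of_le_one_left (abs_nonneg s) hγ
  rw [hsplit]
  calc |α * (c ⬝ᵥ b₁ - q * k₁) + β * (c ⬝ᵥ b₂ - q * k₂)|
      ≤ |c ⬝ᵥ b₁ - q * k₁| + |c ⬝ᵥ b₂ - q * k₂| :=
        (abs_add_le _ _).trans (add_le_add (habs hα _) (habs hβ _))
    _ < q := by obtain ⟨t, rfl⟩ := hq; push_cast at *; omega

theorem stmt11_general (m : ℕ) (v : Fin m → Fin 2 → ℤ)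
    (hprim : ∀ j, IsCoprime (v j 0) (v j 1))
    (h2reg : ∀ j k : Fin m,
      LinearIndependent ℝ ![fun i => (v j i : ℝ), fun i => (v k i : ℝ)] →
      (Submodule.span ℤ ({v j, v k} : Set (Fin 2 → ℤ))).toAddSubgroup.index = 1 ∨
        (Submodule.span ℤ ({v j, v k} : Set (Fin 2 → ℤ))).toAddSubgroup.index = 2)
    (q : ℕ) (hodd : Odd q) :
    ∀ a : Fin 2 → ℝ, (∀ i, ∃ k : ℤ, a i = (k : ℝ) / q) →
      ∃ x : Fin 2 → ℤ, ∀ j, |∑ i, (a i - (x i : ℝ)) * (v j i : ℝ)| < 1 := by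
  intro a ha
  choose c hc using ha
  have hwedge : ∀ j k, |wedge (v j) (v k)| ≤ 2 := fun j k => by
    by_cases h0 : wedge (v j) (v k) = 0
    · simp [h0]
    refine abs_wedge_le_two (hprim j) (h2reg j k (linearIndependent_of_wedge_ne_zero ?_))
    exact intCast_wedge (R := ℝ) (v j) (v k) ▸ Int.cast_ne_zero.mpr h0
  obtain ⟨b₁, b₂, hb, hv⟩ := exists_wedge_eq_one_forall_mem_unitBox hprim hwedge
  obtain ⟨x, hx⟩ := exists_forall_abs_dotProduct_lt hb hodd c
  refine ⟨x, fun j => ?_⟩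
  have hq : (0 : ℝ) < q := by exact_mod_cast hodd.pos
  have hsum : ∑ i, (a i - (x i : ℝ)) * (v j i : ℝ) = ((c - (q : ℤ) • x) ⬝ᵥ v j : ℤ) / q := by
    simp only [hc, dotProduct, Fin.sum_univ_two, Pi.sub_apply, Pi.smul_apply, smul_eq_mul]
    push_cast
    field_simp
  rw [hsum, abs_div, abs_of_pos hq, div_lt_one hq]
  exact_mod_cast hx _ (hv j)

/-- Theorem 1.5: If `v 1, ..., v m ∈ ℤ²` are primitive, span ℝ², and
every linearly independent pair spans a sublattice of index 1 or 2, then for every odd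
`q ≥ 3` each class of `(1/q)ℤ²/ℤ²` has a representative in
`{u : |⟨u, v j⟩| < 1 ∀ j}`. -/
theorem stmt11 (m : ℕ) (v : Fin m → Fin 2 → ℤ)
    (hprim : ∀ j, IsCoprime (v j 0) (v j 1))
    (hspan : Submodule.span ℝ (Set.range fun j => fun i => (v j i : ℝ)) = ⊤)
    (h2reg : ∀ j k : Fin m,
      LinearIndependent ℝ ![fun i => (v j i : ℝ), fun i => (v k i : ℝ)] →
      (Submodule.span ℤ ({v j, v k} : Set (Fin 2 → ℤ))).toAddSubgroup.index = 1 ∨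
        (Submodule.span ℤ ({v j, v k} : Set (Fin 2 → ℤ))).toAddSubgroup.index = 2)
    (q : ℕ) (hq : 3 ≤ q) (hodd : Odd q) :
    ∀ a : Fin 2 → ℝ, (∀ i, ∃ k : ℤ, a i = (k : ℝ) / q) →
      ∃ x : Fin 2 → ℤ, ∀ j, |∑ i, (a i - (x i : ℝ)) * (v j i : ℝ)| < 1 :=
  stmt11_general m v hprim h2reg q hodd
end

section
/- Let v_1,...,v_m ∈ ℤ² be primitive vectors such that the configuration contains the standard basis e_1, e_2, every vector has positive first coordinate or equals e_2, and the configuration is 2-regular (every linearly independent pair spans a sublattice of index 1 or 2). Then each v_j lies in the set {e_1, e_2, (1,1), (1,-1), (1,2), (1,-2), (2,1), (2,-1)}, and moreover the configuration contains at most one vector from {(1,2), (1,-2), (2,1), (2,-1)}. -/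
/-!
The index of the lattice spanned by two independent integer vectors is the absolute value of
their determinant, so 2-regularity says that every pair of vectors of the configuration has
determinant of absolute value at most 2. Pairing with `e₂` and `e₁` bounds both coordinates of
every vector by 2, and primitivity rules out `(2,0)` and `(2,±2)`. Two distinct vectors among
`(1,±2), (2,±1)` have determinant of absolute value 3, 4 or 5, so at most one of them occurs.
-/

theorem index_span_eq_natAbs_det {ι : Type*} [Fintype ι] [DecidableEq ι]
    (v : ι → ι → ℤ) (hv : (Matrix.of v).det ≠ 0) :
    (Submodule.span ℤ (Set.range v)).toAddSubgroup.index = (Matrix.of v).det.natAbs := by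
  let bN := Module.Basis.span (Matrix.linearIndependent_rows_of_det_ne_zero hv)
  rw [AddSubgroup.index_eq_natAbs_det (Pi.basisFun ℤ ι) _ bN, Module.Basis.det_apply,
    ← Matrix.det_transpose]
  congr 2
  ext i j
  rw [Matrix.transpose_apply, Module.Basis.toMatrix_apply, Pi.basisFun_repr]
  exact congrFun (congrArg Subtype.val (Module.Basis.span_apply _ i)) j

theorem linearIndependent_intCast_of_det_ne_zero {ι : Type*} [Fintype ι] [DecidableEq ι]
    (v : ι → ι → ℤ) (hv : (Matrix.of v).det ≠ 0) :
    LinearIndependent ℝ (fun i j => (v i j : ℝ)) :=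
  Matrix.linearIndependent_rows_of_det_ne_zero (A := (Matrix.of v).map Int.cast)
    (by rw [← Int.cast_det]; exact_mod_cast hv)

theorem abs_det_le_two_of_index_le_two (a b : Fin 2 → ℤ)
    (h : LinearIndependent ℝ ![fun i => (a i : ℝ), fun i => (b i : ℝ)] →
      (Submodule.span ℤ ({a, b} : Set (Fin 2 → ℤ))).toAddSubgroup.index = 1 ∨
        (Submodule.span ℤ ({a, b} : Set (Fin 2 → ℤ))).toAddSubgroup.index = 2) :
    |(Matrix.of ![a, b]).det| ≤ 2 := by
  rcases eq_or_ne (Matrix.of ![a, b]).det 0 with hd | hd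
  · simp [hd]
  have hli : LinearIndependent ℝ ![fun i => (a i : ℝ), fun i => (b i : ℝ)] := by
    convert linearIndependent_intCast_of_det_ne_zero _ hd using 1
    ext i j
    fin_cases i <;> rfl
  have hindex := index_span_eq_natAbs_det _ hd
  rw [Matrix.range_cons_cons_empty] at hindex
  rw [Int.abs_eq_natAbs]
  rcases h hli with h | h <;> omega

theorem mem_of_isCoprime_of_abs_le_two (w : Fin 2 → ℤ) (hw : IsCoprime (w 0) (w 1))
    (hpos : 0 < w 0 ∨ w = ![0, 1]) (h0 : |w 0| ≤ 2) (h1 : |w 1| ≤ 2) :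
    w ∈ ({![1,0], ![0,1], ![1,1], ![1,-1], ![1,2], ![1,-2], ![2,1], ![2,-1]} :
      Set (Fin 2 → ℤ)) := by
  rcases hpos with hpos | rfl
  · rw [abs_le] at h0 h1
    have hw' : w = ![w 0, w 1] := by ext i; fin_cases i <;> rfl
    rw [hw'] at hw ⊢
    generalize w 0 = x, w 1 = y at *
    simp only [Matrix.cons_val_zero, Matrix.cons_val_one, Int.isCoprime_iff_gcd_eq_one] at hw
    obtain ⟨-, hx⟩ := h0
    obtain ⟨hy, hy'⟩ := h1
    interval_cases x <;> interval_cases y <;> simp_all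
  · simp

theorem three_le_abs_det_of_ne (a b : Fin 2 → ℤ)
    (ha : a ∈ ({![1,2], ![1,-2], ![2,1], ![2,-1]} : Set (Fin 2 → ℤ)))
    (hb : b ∈ ({![1,2], ![1,-2], ![2,1], ![2,-1]} : Set (Fin 2 → ℤ))) (hab : a ≠ b) :
    3 ≤ |(Matrix.of ![a, b]).det| := by
  simp only [Set.mem_insert_iff, Set.mem_singleton_iff] at ha hb
  rcases ha with rfl | rfl | rfl | rfl <;> rcases hb with rfl | rfl | rfl | rfl <;>
    simp_all [Matrix.det_fin_two]

/-- A 2-regular configuration of primitive vectors in ℤ² containing the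
standard basis, all of whose vectors have positive first coordinate or equal `e₂`,
is contained in `{e₁, e₂, (1,1), (1,-1), (1,2), (1,-2), (2,1), (2,-1)}` and contains at
most one vector from `{(1,2), (1,-2), (2,1), (2,-1)}`. -/
theorem stmt12 (m : ℕ) (v : Fin m → Fin 2 → ℤ)
    (hprim : ∀ j, IsCoprime (v j 0) (v j 1))
    (he₁ : ∃ j, v j = ![1, 0]) (he₂ : ∃ j, v j = ![0, 1])
    (hpos : ∀ j, 0 < v j 0 ∨ v j = ![0, 1])
    (h2reg : ∀ j k : Fin m,
      LinearIndependent ℝ ![fun i => (v j i : ℝ), fun i => (v k i : ℝ)] →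
      (Submodule.span ℤ ({v j, v k} : Set (Fin 2 → ℤ))).toAddSubgroup.index = 1 ∨
        (Submodule.span ℤ ({v j, v k} : Set (Fin 2 → ℤ))).toAddSubgroup.index = 2) :
    (∀ j, v j ∈ ({![1,0], ![0,1], ![1,1], ![1,-1], ![1,2], ![1,-2], ![2,1], ![2,-1]} :
        Set (Fin 2 → ℤ))) ∧
    ∀ j k : Fin m,
      v j ∈ ({![1,2], ![1,-2], ![2,1], ![2,-1]} : Set (Fin 2 → ℤ)) →
      v k ∈ ({![1,2], ![1,-2], ![2,1], ![2,-1]} : Set (Fin 2 → ℤ)) →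
      v j = v k := by
  have hdet j k : |(Matrix.of ![v j, v k]).det| ≤ 2 :=
    abs_det_le_two_of_index_le_two _ _ (h2reg j k)
  obtain ⟨j₁, hj₁⟩ := he₁
  obtain ⟨j₂, hj₂⟩ := he₂
  refine ⟨fun j => mem_of_isCoprime_of_abs_le_two _ (hprim j) (hpos j) ?_ ?_,
    fun j k hj hk => ?_⟩
  · simpa [hj₂, Matrix.det_fin_two] using hdet j j₂
  · simpa [hj₁, Matrix.det_fin_two] using hdet j j₁
  · by_contra hne
    have h3 := three_le_abs_det_of_ne _ _ hj hk hne
    exact absurd (hdet j k) (by omega)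
end

section
/- Let v_1,...,v_n ∈ ℤⁿ be linearly independent. Then there is a permutation σ of {1,...,n} and a basis of ℤⁿ (equivalently, a matrix U ∈ GL_n(ℤ)) such that the matrix with columns U·v_{σ(1)},...,U·v_{σ(n)} is upper triangular with nonnegative entries, each off-diagonal entry strictly less than the diagonal entry in its column, and the diagonal entries equal to 1 precisely in the first r columns for some 0 ≤ r ≤ n (i.e., diagonal entries B_{11} = ... = B_{rr} = 1 and B_{jj} ≥ 2 for j > r). -/
/-!
Induction on `n`. Among the columns, take a primitive one if there is any, move it to the
front, and bring it to `d • e₀` with `d ≥ 0` by Euclid's algorithm on the rows; since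
primitivity is invariant under `GL_n(ℤ)`, `d = 1` exactly when the chosen column is primitive.
Recurse on the lower right `(n-1) × (n-1)` block. When `d ≥ 2` no column is primitive, and a
diagonal entry `1` of the triangular matrix would make its column primitive, so all diagonal
entries are then `≥ 2`. Finally each row is reduced modulo the diagonal entries by adding
integer combinations of the rows below it, which keeps the matrix triangular with the same
diagonal.
-/

open Matrix

/-- For a column `v ∈ ℤⁿ` this says that `ℤⁿ ⧸ ℤ v` is torsion-free. -/
def IsPrimitiveVec {ι : Type*} (a : ι → ℤ) : Prop :=
  ∀ d : ℤ, (∀ i, d ∣ a i) → IsUnit d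

section Primitive

variable {ι κ : Type*}

lemma IsPrimitiveVec.of_mulVec [Fintype ι] {M : Matrix κ ι ℤ} {a : ι → ℤ}
    (h : IsPrimitiveVec (M *ᵥ a)) : IsPrimitiveVec a :=
  fun d hd => h d fun _ => Finset.dvd_sum fun j _ => dvd_mul_of_dvd_right (hd j) _

lemma isPrimitiveVec_mulVec_iff [Fintype ι] [DecidableEq ι] {M : Matrix ι ι ℤ} (hM : IsUnit M)
    {a : ι → ℤ} : IsPrimitiveVec (M *ᵥ a) ↔ IsPrimitiveVec a := by
  refine ⟨IsPrimitiveVec.of_mulVec, fun h => ?_⟩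
  refine IsPrimitiveVec.of_mulVec (M := (↑hM.unit⁻¹ : Matrix ι ι ℤ)) ?_
  rwa [mulVec_mulVec, hM.val_inv_mul, one_mulVec]

lemma isPrimitiveVec_of_eq_one {a : ι → ℤ} {i : ι} (h : a i = 1) : IsPrimitiveVec a :=
  fun _ hd => isUnit_of_dvd_one (h ▸ hd i)

lemma isPrimitiveVec_single_iff [DecidableEq ι] {i : ι} {d : ℤ} :
    IsPrimitiveVec (Pi.single i d) ↔ IsUnit d := by
  refine ⟨fun h => h d fun j => ?_, fun h e he => isUnit_of_dvd_unit (by simpa using he i) h⟩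
  rcases eq_or_ne j i with rfl | hj
  · simp
  · simp [hj]

end Primitive

namespace Matrix

lemma transvection_mulVec {ι R : Type*} [Fintype ι] [DecidableEq ι] [CommRing R] (i j : ι)
    (c : R) (a : ι → R) :
    transvection i j c *ᵥ a = Function.update a i (a i + c * a j) := by
  ext k
  rcases eq_or_ne k i with rfl | hki
  · simp [transvection, add_mulVec, single_mulVec]
  · simp [transvection, add_mulVec, single_mulVec, hki]

lemma exists_isUnit_mulVec_eq_update_emod {ι : Type*} [Fintype ι] [DecidableEq ι] {i j : ι}
    (hij : i ≠ j) (a : ι → ℤ) :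
    ∃ S : Matrix ι ι ℤ, IsUnit S ∧
      S *ᵥ a = Function.update (Function.update a i (a j)) j (a i % a j) := by
  refine ⟨(Equiv.swap i j).permMatrix ℤ * transvection i j (-(a i / a j)), ?_, ?_⟩
  · rw [isUnit_iff_isUnit_det, det_mul, det_permutation, det_transvection_of_ne _ _ hij, mul_one]
    simp
  · ext k
    rw [← mulVec_mulVec, permMatrix_mulVec, transvection_mulVec]
    rcases eq_or_ne k i with rfl | hki
    · simp [hij, hij.symm]
    rcases eq_or_ne k j with rfl | hkj
    · simp only [Function.comp_apply, Equiv.swap_apply_right, Function.update_self, Int.emod_def]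
      ring
    · simp [hki, hkj, Equiv.swap_apply_of_ne_of_ne]

lemma exists_isUnit_mulVec_eq_single {n : ℕ} (a : Fin (n + 1) → ℤ) :
    ∃ W : Matrix (Fin (n + 1)) (Fin (n + 1)) ℤ, IsUnit W ∧ ∃ d, 0 ≤ d ∧
      W *ᵥ a = Pi.single 0 d := by
  induction hμ : ∑ i : Fin n, (a i.succ).natAbs using Nat.strong_induction_on generalizing a with
  | _ N ih =>
    by_cases htail : ∀ i : Fin n, a i.succ = 0
    · have ha : a = Pi.single 0 (a 0) := by
        ext k
        cases k using Fin.cases with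
        | zero => simp
        | succ i => simp [htail i]
      rcases le_or_gt 0 (a 0) with h0 | h0
      · exact ⟨1, isUnit_one, a 0, h0, by rw [one_mulVec, ← ha]⟩
      · refine ⟨-1, isUnit_one.neg, -a 0, by omega, ?_⟩
        rw [neg_mulVec, one_mulVec, ha, Pi.single_neg, Pi.single_eq_same]
    push Not at htail
    obtain ⟨j, hj⟩ := htail
    obtain ⟨S, hS, hSa⟩ := exists_isUnit_mulVec_eq_update_emod (Fin.succ_ne_zero j).symm a
    have hrem : ((S *ᵥ a) j.succ).natAbs < (a j.succ).natAbs := by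
      have := Int.emod_lt (a 0) hj
      have := Int.emod_nonneg (a 0) hj
      simp only [hSa, Function.update_self]
      omega
    have hlt : ∑ i : Fin n, ((S *ᵥ a) i.succ).natAbs < N := by
      rw [← hμ]
      refine Finset.sum_lt_sum (fun i _ => ?_) ⟨j, Finset.mem_univ _, hrem⟩
      rcases eq_or_ne i j with rfl | hij
      · exact hrem.le
      · simp [hSa, hij]
    obtain ⟨W, hW, d, hd, hWa⟩ := ih _ hlt (S *ᵥ a) rfl
    exact ⟨W * S, hW.mul hS, d, hd, by rw [← mulVec_mulVec, hWa]⟩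

section HermiteReduction

variable {ι : Type*} [Fintype ι] [LinearOrder ι] {T : Matrix ι ι ℤ}

lemma exists_vecMul_add_mem_Ico (hT : T.IsUpperTriangular) (hdiag : ∀ k, 0 < T k k)
    (x : ι → ℤ) (s : Finset ι) :
    ∃ t : ι → ℤ, (∀ j ∉ s, t j = 0) ∧
      ∀ k ∈ s, x k + (t ᵥ* T) k ∈ Set.Ico 0 (T k k) := by
  induction s using Finset.induction_on_max with
  | empty => exact ⟨0, fun _ _ => rfl, by simp⟩
  | insert m s hm ih =>
    obtain ⟨t, ht0, ht⟩ := ih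
    set q := (x m + (t ᵥ* T) m) / T m m
    have hstep :
        ∀ k, x k + ((t - Pi.single m q) ᵥ* T) k = x k + (t ᵥ* T) k - q * T m k := by
      intro k
      simp only [sub_vecMul, single_vecMul, smul_eq_mul, Pi.sub_apply, Pi.smul_apply, row_apply]
      ring
    refine ⟨t - Pi.single m q, fun j hj => ?_, fun k hk => ?_⟩
    · rw [Finset.mem_insert, not_or] at hj
      simp [ht0 j hj.2, hj.1]
    rw [hstep]
    rcases Finset.mem_insert.mp hk with rfl | hk
    · rw [mul_comm, ← Int.emod_def]
      exact ⟨Int.emod_nonneg _ (hdiag k).ne', Int.emod_lt_of_pos _ (hdiag k)⟩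
    · -- row `m` of `T` vanishes on the columns in `s`, which stay reduced
      rw [hT (hm k hk), mul_zero, sub_zero]
      exact ht k hk

theorem exists_isUnit_mul_hermite (hT : T.IsUpperTriangular) (hdiag : ∀ k, 0 < T k k) :
    ∃ V : Matrix ι ι ℤ, IsUnit V ∧ (V * T).IsUpperTriangular ∧ (∀ k, (V * T) k k = T k k) ∧
      (∀ i k, 0 ≤ (V * T) i k) ∧ ∀ i k, i < k → (V * T) i k < (V * T) k k := by
  choose t ht0 ht using fun i => exists_vecMul_add_mem_Ico hT hdiag (T i) {j | i < j}
  simp only [Finset.mem_filter, Finset.mem_univ, true_and, not_lt] at ht0 ht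
  have hvanish : ∀ i k, k ≤ i → (t i ᵥ* T) k = 0 := by
    intro i k hki
    refine Finset.sum_eq_zero fun j _ => ?_
    rcases le_or_gt j i with hji | hij
    · rw [ht0 i j hji, zero_mul]
    · exact mul_eq_zero_of_right _ (hT (hki.trans_lt hij))
  have hV : (1 + Matrix.of t).IsUpperTriangular := fun i j (hji : j < i) => by
    simp [one_apply_ne (ne_of_gt hji), ht0 i j hji.le]
  have hVT : ∀ i k, ((1 + Matrix.of t) * T) i k = T i k + (t i ᵥ* T) k := by
    intro i k
    rw [add_mul, one_mul]
    rfl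
  have hdiagVT : ∀ k, ((1 + Matrix.of t) * T) k k = T k k := fun k => by
    rw [hVT, hvanish k k le_rfl, add_zero]
  refine ⟨1 + Matrix.of t, ?_, fun i k hki => ?_, hdiagVT, fun i k => ?_, fun i k hik => ?_⟩
  · rw [isUnit_iff_isUnit_det, det_of_isUpperTriangular hV]
    simp [ht0 _ _ le_rfl]
  · rw [hVT, hT hki, hvanish i k hki.le, add_zero]
  · rcases lt_trichotomy i k with hik | rfl | hki
    · exact (hVT i k ▸ ht i k hik).1
    · exact (hdiagVT i).symm ▸ (hdiag i).le
    · rw [hVT, hT hki, hvanish i k hki.le, add_zero]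
  · rw [hdiagVT, hVT]
    exact (ht i k hik).2

end HermiteReduction

section Succ

variable {R : Type*} {n : ℕ}

def extendByOne [Zero R] [One R] (U : Matrix (Fin n) (Fin n) R) :
    Matrix (Fin (n + 1)) (Fin (n + 1)) R :=
  of (Fin.cons (Pi.single 0 1) fun i => Fin.cons 0 (U i))

lemma det_eq_mul_det_submatrix_succ [CommRing R] (M : Matrix (Fin (n + 1)) (Fin (n + 1)) R)
    (hM : ∀ i : Fin n, M i.succ 0 = 0) : M.det = M 0 0 * (M.submatrix Fin.succ Fin.succ).det := by
  simp [det_succ_column_zero, Fin.sum_univ_succ, hM]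

lemma isUnit_extendByOne [CommRing R] {U : Matrix (Fin n) (Fin n) R} (hU : IsUnit U) :
    IsUnit (extendByOne U) := by
  have hsub : (extendByOne U).submatrix Fin.succ Fin.succ = U := by
    ext i j
    simp [extendByOne]
  rw [isUnit_iff_isUnit_det, det_eq_mul_det_submatrix_succ _ fun i => by simp [extendByOne], hsub]
  simpa [extendByOne] using (isUnit_iff_isUnit_det U).mp hU

lemma extendByOne_mul_apply_zero [Semiring R] (U : Matrix (Fin n) (Fin n) R) {m : Type*}
    (N : Matrix (Fin (n + 1)) m R) (j : m) : (extendByOne U * N) 0 j = N 0 j := by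
  simp [extendByOne, mul_apply, Fin.sum_univ_succ]

lemma extendByOne_mul_apply_succ [Semiring R] (U : Matrix (Fin n) (Fin n) R) {m : Type*}
    (N : Matrix (Fin (n + 1)) m R) (i : Fin n) (j : m) :
    (extendByOne U * N) i.succ j = (U * N.submatrix Fin.succ id) i j := by
  simp [extendByOne, mul_apply, Fin.sum_univ_succ]

lemma extendByOne_mul_submatrix_decomposeFin [Semiring R] (U : Matrix (Fin n) (Fin n) R)
    (σ : Equiv.Perm (Fin n)) {M : Matrix (Fin (n + 1)) (Fin (n + 1)) R}
    (hM : ∀ i : Fin n, M i.succ 0 = 0) :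
    let T := extendByOne U * M.submatrix id (Equiv.Perm.decomposeFin.symm (0, σ))
    T 0 0 = M 0 0 ∧ (∀ i : Fin n, T i.succ 0 = 0) ∧
      T.submatrix Fin.succ Fin.succ = U * (M.submatrix Fin.succ Fin.succ).submatrix id σ := by
  refine ⟨?_, fun i => ?_, ?_⟩
  · simp [extendByOne_mul_apply_zero]
  · rw [extendByOne_mul_apply_succ]
    simp [mul_apply, hM]
  · ext i k
    rw [submatrix_apply, extendByOne_mul_apply_succ]
    simp [mul_apply]

lemma isUpperTriangular_of_submatrix_succ [Zero R] {M : Matrix (Fin (n + 1)) (Fin (n + 1)) R}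
    (h0 : ∀ i : Fin n, M i.succ 0 = 0) (h : (M.submatrix Fin.succ Fin.succ).IsUpperTriangular) :
    M.IsUpperTriangular := by
  intro i j (hji : j < i)
  cases i using Fin.cases with
  | zero => exact absurd hji (Fin.not_lt_zero j)
  | succ i =>
    cases j using Fin.cases with
    | zero => exact h0 i
    | succ j => exact h (Fin.succ_lt_succ_iff.mp hji)

end Succ

end Matrix

structure IsPreferredTriangular {n : ℕ} (T : Matrix (Fin n) (Fin n) ℤ) (r : ℕ) : Prop where
  isUpperTriangular : T.IsUpperTriangular
  diag_eq_one : ∀ k : Fin n, (k : ℕ) < r → T k k = 1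
  two_le_diag : ∀ k : Fin n, r ≤ (k : ℕ) → 2 ≤ T k k

namespace IsPreferredTriangular

lemma diag_pos {n r : ℕ} {T : Matrix (Fin n) (Fin n) ℤ} (hT : IsPreferredTriangular T r)
    (k : Fin n) : 0 < T k k := by
  rcases lt_or_ge (k : ℕ) r with hk | hk
  · rw [hT.diag_eq_one k hk]
    exact one_pos
  · linarith [hT.two_le_diag k hk]

variable {n r : ℕ} {T : Matrix (Fin (n + 1)) (Fin (n + 1)) ℤ}

lemma of_submatrix_succ_of_eq_one (h0 : ∀ i : Fin n, T i.succ 0 = 0) (h1 : T 0 0 = 1)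
    (hT : IsPreferredTriangular (T.submatrix Fin.succ Fin.succ) r) :
    IsPreferredTriangular T (r + 1) where
  isUpperTriangular := isUpperTriangular_of_submatrix_succ h0 hT.isUpperTriangular
  diag_eq_one k hk := by
    cases k using Fin.cases with
    | zero => exact h1
    | succ k => exact hT.diag_eq_one k (by simpa using hk)
  two_le_diag k hk := by
    cases k using Fin.cases with
    | zero => simp at hk
    | succ k => exact hT.two_le_diag k (by simpa using hk)

lemma of_submatrix_succ_of_ne_one (h0 : ∀ i : Fin n, T i.succ 0 = 0) (h2 : 2 ≤ T 0 0)
    (hT : IsPreferredTriangular (T.submatrix Fin.succ Fin.succ) r) (hne : ∀ k, T k k ≠ 1) :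
    IsPreferredTriangular T 0 where
  isUpperTriangular := isUpperTriangular_of_submatrix_succ h0 hT.isUpperTriangular
  diag_eq_one k hk := absurd hk k.val.not_lt_zero
  two_le_diag k _ := by
    cases k using Fin.cases with
    | zero => exact h2
    | succ k =>
      have hpos : 0 < T k.succ k.succ := hT.diag_pos k
      have := hne k.succ
      omega

end IsPreferredTriangular

lemma exists_isUnit_mul_submatrix_swap_apply_zero {n : ℕ}
    (A : Matrix (Fin (n + 1)) (Fin (n + 1)) ℤ) (c : Fin (n + 1)) :
    ∃ W : Matrix (Fin (n + 1)) (Fin (n + 1)) ℤ, IsUnit W ∧ ∃ d, 0 ≤ d ∧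
      (IsPrimitiveVec (fun i => A i c) ↔ d = 1) ∧
      ∀ i, (W * A.submatrix id (Equiv.swap 0 c)) i 0 = Pi.single 0 d i := by
  obtain ⟨W, hW, d, hd, hWa⟩ := exists_isUnit_mulVec_eq_single fun i => A i c
  refine ⟨W, hW, d, hd, ?_, fun i => ?_⟩
  · rw [← isPrimitiveVec_mulVec_iff hW, hWa, isPrimitiveVec_single_iff, Int.isUnit_iff]
    omega
  · rw [← hWa]
    simp [mul_apply, mulVec, dotProduct]

theorem exists_isPreferredTriangular {n : ℕ} (A : Matrix (Fin n) (Fin n) ℤ)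
    (hA : A.det ≠ 0) :
    ∃ (σ : Equiv.Perm (Fin n)) (U : Matrix (Fin n) (Fin n) ℤ) (r : ℕ), r ≤ n ∧ IsUnit U ∧
      IsPreferredTriangular (U * A.submatrix id σ) r := by
  induction n with
  | zero =>
    exact ⟨1, 1, 0, le_rfl, isUnit_one, fun i => i.elim0, fun k => k.elim0, fun k => k.elim0⟩
  | succ n ih =>
    obtain ⟨c, hc⟩ : ∃ c, (∃ c', IsPrimitiveVec fun i => A i c') →
        IsPrimitiveVec fun i => A i c :=
      (em _).elim (fun ⟨c, hc⟩ => ⟨c, fun _ => hc⟩) fun h => ⟨0, fun h' => absurd h' h⟩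
    obtain ⟨W, hW, d, hd, hprim, hM0⟩ := exists_isUnit_mul_submatrix_swap_apply_zero A c
    set M := W * A.submatrix id (Equiv.swap 0 c)
    have hdetM : M.det = d * (M.submatrix Fin.succ Fin.succ).det := by
      rw [det_eq_mul_det_submatrix_succ M fun i => by simp [hM0]]
      simp [hM0]
    have hM : M.det ≠ 0 := by
      rw [det_mul, det_permute']
      exact mul_ne_zero ((isUnit_iff_isUnit_det W).mp hW).ne_zero (mul_ne_zero (by simp) hA)
    obtain ⟨σ', U', r', hr', hU', hT'⟩ :=
      ih (M.submatrix Fin.succ Fin.succ) (right_ne_zero_of_mul (hdetM ▸ hM))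
    set τ : Equiv.Perm (Fin (n + 1)) := Equiv.Perm.decomposeFin.symm (0, σ')
    obtain ⟨hT00, hT0, hTsucc⟩ :=
      extendByOne_mul_submatrix_decomposeFin U' σ' (M := M) fun i => by simp [hM0]
    set T := extendByOne U' * M.submatrix id τ
    have hT : T = (extendByOne U' * W) * A.submatrix id (Equiv.swap 0 c * τ) := by
      rw [Matrix.mul_assoc]
      rfl
    refine ⟨Equiv.swap 0 c * τ, extendByOne U' * W, ?_⟩
    rw [← hT]
    have hunit := (isUnit_extendByOne hU').mul hW
    rw [hM0, Pi.single_eq_same] at hT00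
    by_cases hd1 : d = 1
    · exact ⟨r' + 1, by omega, hunit,
        .of_submatrix_succ_of_eq_one hT0 (hT00.trans hd1) (hTsucc ▸ hT')⟩
    have hd0 : d ≠ 0 := left_ne_zero_of_mul (hdetM ▸ hM)
    refine ⟨0, Nat.zero_le _, hunit,
      .of_submatrix_succ_of_ne_one hT0 (by omega) (hTsucc ▸ hT') fun k hk => hd1 ?_⟩
    -- a diagonal entry `1` makes its column of `T`, hence a column of `A`, primitive
    refine hprim.mp (hc ⟨(Equiv.swap 0 c * τ) k, ?_⟩)
    refine .of_mulVec (M := extendByOne U' * W) (isPrimitiveVec_of_eq_one (i := k) ?_)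
    rw [← hk, hT]
    rfl

lemma det_ne_zero_of_linearIndependent {ι K : Type*} [Fintype ι] [DecidableEq ι] [Field K]
    [CharZero K] (v : Matrix ι ι ℤ) (h : LinearIndependent K fun j i => (v j i : K)) :
    v.det ≠ 0 := by
  have := (linearIndependent_rows_iff_isUnit (A := v.map ((↑) : ℤ → K))).mp h
  rw [isUnit_iff_isUnit_det, isUnit_iff_ne_zero, ← Int.cast_det] at this
  exact_mod_cast this

/-- preferred Hermite normal form: linearly independent
`v 1, ..., v n ∈ ℤⁿ` can be reordered by a permutation `σ` and transformed by a
matrix `U ∈ GL_n(ℤ)` so that the matrix `B` with columns `U · v (σ k)` is upper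
triangular, in Hermite normal form, with diagonal entries equal to 1 exactly in the
first `r` columns. -/
theorem stmt15 (n : ℕ) (v : Fin n → Fin n → ℤ)
    (hindep : LinearIndependent ℝ (fun j => fun i => (v j i : ℝ))) :
    ∃ (σ : Equiv.Perm (Fin n)) (U : Matrix (Fin n) (Fin n) ℤ) (r : ℕ), r ≤ n ∧
      IsUnit U.det ∧
      ∀ B : Matrix (Fin n) (Fin n) ℤ,
        (∀ i k : Fin n, B i k = U.mulVec (v (σ k)) i) →
        (∀ i k : Fin n, k < i → B i k = 0) ∧
        (∀ i k : Fin n, 0 ≤ B i k) ∧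
        (∀ i k : Fin n, i < k → B i k < B k k) ∧
        (∀ k : Fin n, (k : ℕ) < r → B k k = 1) ∧
        (∀ k : Fin n, r ≤ (k : ℕ) → 2 ≤ B k k) := by
  have hA : (Matrix.of v)ᵀ.det ≠ 0 := by
    rw [det_transpose]
    exact det_ne_zero_of_linearIndependent (Matrix.of v) hindep
  obtain ⟨σ, U, r, hr, hU, hT⟩ := exists_isPreferredTriangular _ hA
  obtain ⟨V, hV, hVT, hdiag, hnonneg, hlt⟩ :=
    exists_isUnit_mul_hermite hT.isUpperTriangular hT.diag_pos
  refine ⟨σ, V * U, r, hr, (isUnit_iff_isUnit_det _).mp (hV.mul hU), fun B hB => ?_⟩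
  obtain rfl : B = V * (U * (Matrix.of v)ᵀ.submatrix id σ) := by
    ext i k
    rw [hB, ← Matrix.mul_assoc]
    rfl
  exact ⟨fun i k hki => hVT hki, hnonneg, hlt, fun k hk => (hdiag k).trans (hT.diag_eq_one k hk),
    fun k hk => (hdiag k).symm ▸ hT.two_le_diag k hk⟩
end

section
/- Let N = ℤⁿ, q, q' ≥ 2, and let v_1,...,v_m ∈ ℤⁿ span ℝⁿ, and let F = { u ∈ ℝⁿ : |⟨u, v_j⟩| < 1 for all j } be the open polytope, which is convex and symmetric (F = -F). If for every a ∈ (1/q)ℤⁿ there is x ∈ ℤⁿ with a - x ∈ F, and for every a' ∈ (1/q')ℤⁿ there is x' ∈ ℤⁿ with a' - x' ∈ F, then for every b ∈ (1/(qq'))ℤⁿ there is y ∈ ℤⁿ with b - y ∈ F. -/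
/-- multiplicativity: If the open symmetric convex region
`F = {u : |⟨u, v j⟩| < 1 ∀ j}` contains a representative of every class of
`(1/q)ℤⁿ/ℤⁿ` and of every class of `(1/q')ℤⁿ/ℤⁿ`, then it contains a representative
of every class of `(1/(q·q'))ℤⁿ/ℤⁿ`. -/
theorem stmt19 (n m : ℕ) (v : Fin m → Fin n → ℤ)
    (hspan : Submodule.span ℝ (Set.range fun j => fun i => (v j i : ℝ)) = ⊤)
    (q q' : ℕ) (hq : 2 ≤ q) (hq' : 2 ≤ q')
    (F : Set (Fin n → ℝ))
    (hF : F = {u : Fin n → ℝ | ∀ j, |∑ i, u i * (v j i : ℝ)| < 1})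
    (hrepq : ∀ a : Fin n → ℝ, (∀ i, ∃ k : ℤ, a i = (k : ℝ) / q) →
      ∃ x : Fin n → ℤ, (a - fun i => (x i : ℝ)) ∈ F)
    (hrepq' : ∀ a : Fin n → ℝ, (∀ i, ∃ k : ℤ, a i = (k : ℝ) / q') →
      ∃ x : Fin n → ℤ, (a - fun i => (x i : ℝ)) ∈ F) :
    ∀ b : Fin n → ℝ, (∀ i, ∃ k : ℤ, b i = (k : ℝ) / (q * q')) →
      ∃ y : Fin n → ℤ, (b - fun i => (y i : ℝ)) ∈ F := by
  subst hF
  intro b hb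
  have hq0 : (0:ℝ) < q := by
    have : (2:ℝ) ≤ q := by exact_mod_cast hq
    linarith
  have hq'0 : (0:ℝ) < q' := by
    have : (2:ℝ) ≤ q' := by exact_mod_cast hq'
    linarith
  obtain ⟨x, hx⟩ := hrepq' (fun i => (q:ℝ) * b i) (fun i => by
    obtain ⟨k, hk⟩ := hb i
    refine ⟨k, ?_⟩
    show (q:ℝ) * b i = (k:ℝ) / q'
    rw [hk]
    field_simp)
  obtain ⟨y, hy⟩ := hrepq (fun i => (x i : ℝ) / q) (fun i => ⟨x i, rfl⟩)
  refine ⟨y, fun j => ?_⟩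
  simp only [Set.mem_setOf_eq, Pi.sub_apply] at hx hy ⊢
  have hx1 := hx j
  have hy1 := hy j
  set s1 : ℝ := ∑ i, ((q:ℝ) * b i - (x i : ℝ)) * (v j i : ℝ) with hs1
  set s2 : ℝ := ∑ i, ((x i : ℝ) / q - (y i : ℝ)) * (v j i : ℝ) with hs2
  set M : ℤ := ∑ i, (x i - (q:ℤ) * y i) * v j i with hMdef
  have hM : (M : ℝ) = q * s2 := by
    rw [hs2, Finset.mul_sum, hMdef]
    push_cast
    refine Finset.sum_congr rfl fun i _ => ?_
    field_simp
  have hMlt : |(M:ℝ)| < q := by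
    rw [hM, abs_mul, abs_of_pos hq0]
    calc (q:ℝ) * |s2| < q * 1 := by exact mul_lt_mul_of_pos_left hy1 hq0
    _ = q := mul_one _
  have hMint : |M| ≤ (q:ℤ) - 1 := by
    have : |M| < (q:ℤ) := by exact_mod_cast (by rwa [← Int.cast_abs] at hMlt : ((|M|:ℤ):ℝ) < q)
    omega
  have hs2le : |s2| ≤ ((q:ℝ) - 1) / q := by
    have hMr : |(M:ℝ)| ≤ (q:ℝ) - 1 := by
      have := hMint
      push_cast at this ⊢
      rw [← Int.cast_abs]
      exact_mod_cast this
    have hs2eq : s2 = (M:ℝ) / q := by rw [hM]; field_simp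
    rw [hs2eq, abs_div, abs_of_pos hq0]
    gcongr
  have key : ∑ i, (b i - (y i : ℝ)) * (v j i : ℝ) = s1 / q + s2 := by
    rw [hs1, hs2, Finset.sum_div, ← Finset.sum_add_distrib]
    apply Finset.sum_congr rfl
    intro i _
    field_simp
    ring
  rw [key]
  calc |s1 / q + s2| ≤ |s1 / q| + |s2| := abs_add_le _ _
    _ = |s1| / q + |s2| := by rw [abs_div, abs_of_pos hq0]
    _ < 1 / q + ((q:ℝ) - 1) / q := by
        apply add_lt_add_of_lt_of_le _ hs2le
        exact (div_lt_div_iff_of_pos_right hq0).mpr hx1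
    _ = 1 := by field_simp; ring
end
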